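/- arXiv:2411.05798 — 8 statements merged into one kernel-verified Lean document; each statement's English description precedes it below -/
import Mathlib

section
/- If an MC-FCNF instance admits at least one valid flow, then there exists an ILP-optimal valid flow, i.e., a valid flow f such that cost(f) ≤ cost(g) for every valid flow g. -/
open Finset

/-- An instance of the Multi-Capacity Fixed-Charge Network Flow problem. -/
structure MCFCNF (V E K : Type) [Fintype V] [Fintype E] [Fintype K] where
  src : E → V
  dst : E → V
  s : V
  t : V
  s_ne_t : s ≠ t
  c : K → ℝ
  c_nonneg : ∀ k, 0 ≤ c k
  a : E × K → ℝ
  a_nonneg : ∀ p, 0 ≤ a p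
  b : E × K → ℝ
  b_nonneg : ∀ p, 0 ≤ b p
  T : ℝ
  T_nonneg : 0 ≤ T

namespace MCFCNF

variable {V E K : Type} [Fintype V] [Fintype E] [Fintype K]

open scoped Classical in
/-- `f` is a valid flow for the instance `I`. -/
def IsValidFlow (I : MCFCNF V E K) (f : E × K → ℝ) : Prop :=
  (∀ p : E × K, 0 ≤ f p ∧ f p ≤ I.c p.2) ∧
  (∀ v : V, v ≠ I.s → v ≠ I.t →
    ∑ e ∈ Finset.univ.filter (fun e => I.src e = v), ∑ k : K, f (e, k) =
    ∑ e ∈ Finset.univ.filter (fun e => I.dst e = v), ∑ k : K, f (e, k)) ∧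
  ∑ e ∈ Finset.univ.filter (fun e => I.src e = I.s), ∑ k : K, f (e, k) = I.T

open scoped Classical in
/-- The support of a flow: the edge-capacity pairs carrying positive flow. -/
noncomputable def supp (f : E × K → ℝ) : Finset (E × K) :=
  Finset.univ.filter (fun p => 0 < f p)

/-- The true (ILP) cost of a flow: fixed costs on the support plus variable costs. -/
noncomputable def cost (I : MCFCNF V E K) (f : E × K → ℝ) : ℝ :=
  ∑ p ∈ supp f, I.a p + ∑ p : E × K, I.b p * f p

/-- The variable cost of `f` over a set `H` of edge-capacity pairs. -/
def varcost (I : MCFCNF V E K) (H : Finset (E × K)) (f : E × K → ℝ) : ℝ :=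
  ∑ p ∈ H, I.b p * f p

/-- The scaled (LP) cost of `f` with fixed-cost scaling parameters `d`. -/
noncomputable def scost (I : MCFCNF V E K) (d : E × K → ℝ) (f : E × K → ℝ) : ℝ :=
  ∑ p : E × K, (I.a p / d p + I.b p) * f p

end MCFCNF

/-- If an MC-FCNF instance admits at least one valid flow, then there exists an
ILP-optimal valid flow. -/
theorem exists_ilp_optimal_flow {V E K : Type} [Fintype V] [Fintype E] [Fintype K]
    (I : MCFCNF V E K) (h : ∃ f, I.IsValidFlow f) :
    ∃ f, I.IsValidFlow f ∧ ∀ g, I.IsValidFlow g → I.cost f ≤ I.cost g := by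
  classical
  -- For each candidate support set `S`, the set of valid flows vanishing off `S`.
  set C : Finset (E × K) → Set ((E × K) → ℝ) :=
    fun S => {f | I.IsValidFlow f ∧ ∀ p ∉ S, f p = 0} with hC
  -- The relaxed cost with fixed charges paid on all of `S`.
  set φ : Finset (E × K) → ((E × K) → ℝ) → ℝ :=
    fun S f => ∑ p ∈ S, I.a p + ∑ p : E × K, I.b p * f p with hφ
  have hφcont : ∀ S, Continuous (φ S) := by
    intro S
    exact continuous_const.add (continuous_finset_sum _ fun p _ =>
      continuous_const.mul (continuous_apply p))
  have hclosed : ∀ S, IsClosed (C S) := by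
    intro S
    have h1 : IsClosed {f : (E × K) → ℝ | ∀ p : E × K, 0 ≤ f p ∧ f p ≤ I.c p.2} := by
      have : {f : (E × K) → ℝ | ∀ p : E × K, 0 ≤ f p ∧ f p ≤ I.c p.2}
          = ⋂ p : E × K, ({f : (E × K) → ℝ | 0 ≤ f p} ∩ {f | f p ≤ I.c p.2}) := by
        ext f; simp [Set.mem_iInter, forall_and]
      rw [this]
      exact isClosed_iInter fun p =>
        (isClosed_le continuous_const (continuous_apply p)).inter
          (isClosed_le (continuous_apply p) continuous_const)
    have hcont2 : ∀ (t : Finset E), Continuous (fun f : (E × K) → ℝ =>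
        ∑ e ∈ t, ∑ k : K, f (e, k)) := by
      intro t
      exact continuous_finset_sum _ fun e _ => continuous_finset_sum _ fun k _ =>
        continuous_apply (e, k)
    have h2 : IsClosed {f : (E × K) → ℝ | ∀ v : V, v ≠ I.s → v ≠ I.t →
        ∑ e ∈ Finset.univ.filter (fun e => I.src e = v), ∑ k : K, f (e, k) =
        ∑ e ∈ Finset.univ.filter (fun e => I.dst e = v), ∑ k : K, f (e, k)} := by
      have : {f : (E × K) → ℝ | ∀ v : V, v ≠ I.s → v ≠ I.t →
          ∑ e ∈ Finset.univ.filter (fun e => I.src e = v), ∑ k : K, f (e, k) =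
          ∑ e ∈ Finset.univ.filter (fun e => I.dst e = v), ∑ k : K, f (e, k)}
          = ⋂ v : V, {f : (E × K) → ℝ | v ≠ I.s → v ≠ I.t →
          ∑ e ∈ Finset.univ.filter (fun e => I.src e = v), ∑ k : K, f (e, k) =
          ∑ e ∈ Finset.univ.filter (fun e => I.dst e = v), ∑ k : K, f (e, k)} := by
        ext f; simp [Set.mem_iInter]
      rw [this]
      refine isClosed_iInter fun v => ?_
      by_cases hv : v ≠ I.s ∧ v ≠ I.t
      · have he : {f : (E × K) → ℝ | v ≠ I.s → v ≠ I.t →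
            ∑ e ∈ Finset.univ.filter (fun e => I.src e = v), ∑ k : K, f (e, k) =
            ∑ e ∈ Finset.univ.filter (fun e => I.dst e = v), ∑ k : K, f (e, k)}
            = {f : (E × K) → ℝ |
            ∑ e ∈ Finset.univ.filter (fun e => I.src e = v), ∑ k : K, f (e, k) =
            ∑ e ∈ Finset.univ.filter (fun e => I.dst e = v), ∑ k : K, f (e, k)} := by
          ext f; simp [hv.1, hv.2]
        rw [he]
        exact isClosed_eq (hcont2 _) (hcont2 _)
      · have he : {f : (E × K) → ℝ | v ≠ I.s → v ≠ I.t →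
            ∑ e ∈ Finset.univ.filter (fun e => I.src e = v), ∑ k : K, f (e, k) =
            ∑ e ∈ Finset.univ.filter (fun e => I.dst e = v), ∑ k : K, f (e, k)}
            = Set.univ := by
          ext f
          simp only [Set.mem_setOf_eq, Set.mem_univ, iff_true]
          intro h1 h2; exact absurd ⟨h1, h2⟩ hv
        rw [he]; exact isClosed_univ
    have h3 : IsClosed {f : (E × K) → ℝ |
        ∑ e ∈ Finset.univ.filter (fun e => I.src e = I.s), ∑ k : K, f (e, k) = I.T} :=
      isClosed_eq (hcont2 _) continuous_const
    have h4 : IsClosed {f : (E × K) → ℝ | ∀ p ∉ S, f p = 0} := by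
      have : {f : (E × K) → ℝ | ∀ p ∉ S, f p = 0}
          = ⋂ p : E × K, {f : (E × K) → ℝ | p ∉ S → f p = 0} := by
        ext f; simp [Set.mem_iInter]
      rw [this]
      refine isClosed_iInter fun p => ?_
      by_cases hp : p ∈ S
      · have : {f : (E × K) → ℝ | p ∉ S → f p = 0} = Set.univ := by
          ext f; simp [hp]
        rw [this]; exact isClosed_univ
      · have : {f : (E × K) → ℝ | p ∉ S → f p = 0} = {f | f p = 0} := by
          ext f; simp [hp]
        rw [this]; exact isClosed_eq (continuous_apply p) continuous_const
    have : C S = ({f : (E × K) → ℝ | ∀ p : E × K, 0 ≤ f p ∧ f p ≤ I.c p.2}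
        ∩ {f | ∀ v : V, v ≠ I.s → v ≠ I.t →
        ∑ e ∈ Finset.univ.filter (fun e => I.src e = v), ∑ k : K, f (e, k) =
        ∑ e ∈ Finset.univ.filter (fun e => I.dst e = v), ∑ k : K, f (e, k)}
        ∩ {f | ∑ e ∈ Finset.univ.filter (fun e => I.src e = I.s), ∑ k : K, f (e, k) = I.T}
        ∩ {f | ∀ p ∉ S, f p = 0}) := by
      ext f
      simp only [hC, Set.mem_setOf_eq, Set.mem_inter_iff, MCFCNF.IsValidFlow]
      tauto
    rw [this]
    exact ((h1.inter h2).inter h3).inter h4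
  have hcompact : ∀ S, IsCompact (C S) := by
    intro S
    refine IsCompact.of_isClosed_subset (isCompact_univ_pi
      (fun p : E × K => isCompact_Icc (a := (0:ℝ)) (b := I.c p.2))) (hclosed S) ?_
    intro f hf p _
    exact ⟨(hf.1.1 p).1, (hf.1.1 p).2⟩
  have hmin : ∀ S, (C S).Nonempty → ∃ f ∈ C S, ∀ g ∈ C S, φ S f ≤ φ S g := by
    intro S hne
    obtain ⟨f, hf, hmin⟩ := (hcompact S).exists_isMinOn hne ((hφcont S).continuousOn)
    exact ⟨f, hf, fun g hg => hmin hg⟩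
  choose! F hF1 hF2 using hmin
  -- cost equals the relaxed cost at the support
  have hcost_eq : ∀ g : (E × K) → ℝ, I.cost g = φ (MCFCNF.supp g) g := by
    intro g; rfl
  have hmem_supp : ∀ g : (E × K) → ℝ, I.IsValidFlow g → g ∈ C (MCFCNF.supp g) := by
    intro g hg
    refine ⟨hg, fun p hp => ?_⟩
    have h0 : ¬ 0 < g p := by
      intro hlt
      exact hp (by simp [MCFCNF.supp, hlt])
    linarith [(hg.1 p).1]
  set 𝒯 : Finset (Finset (E × K)) :=
    Finset.univ.filter (fun S => (C S).Nonempty) with h𝒯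
  obtain ⟨f0, hf0⟩ := h
  have h𝒯ne : 𝒯.Nonempty :=
    ⟨MCFCNF.supp f0, by simp [h𝒯]; exact ⟨f0, hmem_supp f0 hf0⟩⟩
  set val : Finset (E × K) → ℝ := fun S => φ S (F S) with hval
  obtain ⟨Ss, hSs𝒯, hSsmin⟩ := 𝒯.exists_min_image val h𝒯ne
  have hSsne : (C Ss).Nonempty := by
    simpa [h𝒯] using hSs𝒯
  have hfs := hF1 Ss hSsne
  refine ⟨F Ss, hfs.1, fun g hg => ?_⟩
  have hSg : MCFCNF.supp g ∈ 𝒯 := by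
    simp only [h𝒯, Finset.mem_filter, Finset.mem_univ, true_and]
    exact ⟨g, hmem_supp g hg⟩
  have hsuppsub : MCFCNF.supp (F Ss) ⊆ Ss := by
    intro p hp
    by_contra hpn
    have := hfs.2 p hpn
    simp [MCFCNF.supp] at hp
    linarith
  calc I.cost (F Ss) = φ (MCFCNF.supp (F Ss)) (F Ss) := hcost_eq _
    _ ≤ φ Ss (F Ss) := by
        simp only [hφ]
        exact add_le_add_left
          (Finset.sum_le_sum_of_subset_of_nonneg hsuppsub (fun p _ _ => I.a_nonneg p)) _
    _ ≤ φ (MCFCNF.supp g) (F (MCFCNF.supp g)) := hSsmin _ hSg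
    _ ≤ φ (MCFCNF.supp g) g :=
        hF2 (MCFCNF.supp g) (by simpa [h𝒯] using hSg) g (hmem_supp g hg)
    _ = I.cost g := (hcost_eq g).symm
end

section
/- Let f_opt be an ILP-optimal valid flow of an MC-FCNF instance and let H = supp(f_opt). If g is a valid flow with supp(g) ⊆ H that minimizes the variable cost over H among all valid flows supported in H (i.e., varcost_H(g) ≤ varcost_H(g') for every valid flow g' with supp(g') ⊆ H), then cost(g) = cost(f_opt); in particular, g is also ILP-optimal. -/
open Finset

open scoped Classical in
/-- If `g` is a valid flow supported in the support `H` of an ILP-optimal flow `f_opt`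
that minimizes the variable cost over `H` among all valid flows supported in `H`,
then `cost g = cost f_opt`; in particular `g` is also ILP-optimal. -/
theorem cost_eq_of_varcost_min_on_opt_support
    {V E K : Type} [Fintype V] [Fintype E] [Fintype K]
    (I : MCFCNF V E K) (fopt : E × K → ℝ)
    (hopt : I.IsValidFlow fopt)
    (hoptmin : ∀ g, I.IsValidFlow g → I.cost fopt ≤ I.cost g)
    (g : E × K → ℝ) (hg : I.IsValidFlow g)
    (hsupp : MCFCNF.supp g ⊆ MCFCNF.supp fopt)
    (hmin : ∀ g', I.IsValidFlow g' → MCFCNF.supp g' ⊆ MCFCNF.supp fopt →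
      I.varcost (MCFCNF.supp fopt) g ≤ I.varcost (MCFCNF.supp fopt) g') :
    I.cost g = I.cost fopt ∧ ∀ g', I.IsValidFlow g' → I.cost g ≤ I.cost g' := by
  classical
  set H := MCFCNF.supp fopt with hH
  have hzero : ∀ f : E × K → ℝ, I.IsValidFlow f → MCFCNF.supp f ⊆ H →
      ∑ p : E × K, I.b p * f p = I.varcost H f := by
    intro f hf hsub
    rw [MCFCNF.varcost]
    refine (Finset.sum_subset (Finset.subset_univ H) ?_).symm
    intro p _ hp
    have h0 : f p = 0 := by
      by_contra h
      have hpos : 0 < f p := lt_of_le_of_ne (hf.1 p).1 (Ne.symm h)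
      exact hp (hsub (by simp [MCFCNF.supp, hpos]))
    simp [h0]
  have hle : I.cost g ≤ I.cost fopt := by
    unfold MCFCNF.cost
    have h1 : ∑ p ∈ MCFCNF.supp g, I.a p ≤ ∑ p ∈ H, I.a p :=
      Finset.sum_le_sum_of_subset_of_nonneg hsupp (fun p _ _ => I.a_nonneg p)
    have h2 : ∑ p : E × K, I.b p * g p ≤ ∑ p : E × K, I.b p * fopt p := by
      rw [hzero g hg hsupp, hzero fopt hopt (subset_refl _)]
      exact hmin fopt hopt (subset_refl _)
    linarith
  have hge : I.cost fopt ≤ I.cost g := hoptmin g hg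
  have heq : I.cost g = I.cost fopt := le_antisymm hle hge
  exact ⟨heq, fun g' hg' => heq ▸ hoptmin g' hg'⟩
end

section
/- Let an MC-FCNF instance admit an ILP-optimal valid flow. Then there exists a function d : E × K → ℝ with d(e,k) > 0 for all (e,k) such that every valid flow g minimizing the scaled cost scost_d over all valid flows is ILP-optimal, i.e., cost(g) ≤ cost(g') for every valid flow g'. (Theorem 1 of the paper.) -/
open Finset

section Aux
open Finset
open scoped Classical
variable {ι : Type} [Fintype ι]

noncomputable def Spt (a x : ι → ℝ) : Finset ι :=
  Finset.univ.filter (fun p => 0 < x p ∧ 0 < a p)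

lemma mem_Spt {a x : ι → ℝ} {p : ι} : p ∈ Spt a x ↔ 0 < x p ∧ 0 < a p := by
  simp [Spt]

noncomputable def Aco (a x : ι → ℝ) : ℝ := ∑ p ∈ Spt a x, a p

noncomputable def Lin (w x : ι → ℝ) : ℝ := ∑ p, w p * x p

noncomputable def Gcost (a b x : ι → ℝ) : ℝ := Aco a x + Lin b x

lemma sum_supp_eq_Aco (a x : ι → ℝ) (ha : ∀ p, 0 ≤ a p) :
    ∑ p ∈ Finset.univ.filter (fun p => 0 < x p), a p = Aco a x := by
  refine (Finset.sum_subset ?_ ?_).symm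
  · intro p hp
    rw [mem_Spt] at hp
    simp only [mem_filter, mem_univ, true_and]
    exact hp.1
  · intro p hp hnp
    simp only [mem_filter, mem_univ, true_and] at hp
    rw [mem_Spt] at hnp
    have : ¬ 0 < a p := fun h => hnp ⟨hp, h⟩
    linarith [ha p]

lemma Lin_combo {κ : Type} (tt : Finset κ) (wt : κ → ℝ) (z : κ → ι → ℝ)
    (b : ι → ℝ) (x : ι → ℝ) (hx : ∀ p, x p = ∑ i ∈ tt, wt i * z i p) :
    Lin b x = ∑ i ∈ tt, wt i * Lin b (z i) := by
  unfold Lin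
  have h : ∀ p, b p * x p = ∑ i ∈ tt, wt i * (b p * z i p) := by
    intro p; rw [hx p, Finset.mul_sum]; exact Finset.sum_congr rfl fun i _ => by ring
  simp_rw [h]
  rw [Finset.sum_comm]
  exact Finset.sum_congr rfl fun i _ => by rw [Finset.mul_sum]

lemma extremePoints_finite (P : Set (ι → ℝ)) (c : ι → ℝ)
    (hbox : ∀ x ∈ P, ∀ p, 0 ≤ x p ∧ x p ≤ c p)
    (hAff : ∀ x ∈ P, ∀ y ∈ P, ∀ s : ℝ,
      (∀ p, 0 ≤ x p + s * (y p - x p) ∧ x p + s * (y p - x p) ≤ c p) →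
      (fun p => x p + s * (y p - x p)) ∈ P) :
    (Set.extremePoints ℝ P).Finite := by
  rw [← Set.finite_coe_iff]
  have hinj : Function.Injective
      (fun (x : Set.extremePoints ℝ P) => (fun p => (decide (x.1 p = 0), decide (x.1 p = c p)) : ι → Bool × Bool)) := by
    rintro ⟨x, hx⟩ ⟨y, hy⟩ hxy
    simp only [Subtype.mk.injEq]
    by_contra hne
    have hxP : x ∈ P := hx.1
    have hyP : y ∈ P := hy.1
    set u : ι → ℝ := fun p => y p - x p with hu
    have hu0 : ∀ p, (x p = 0 ∨ x p = c p) → u p = 0 := by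
      intro p hp
      have h1 := congrFun hxy p
      simp only [Prod.mk.injEq, decide_eq_decide] at h1
      rcases hp with h | h
      · have : y p = 0 := h1.1.mp h
        simp [hu, this, h]
      · have : y p = c p := h1.2.mp h
        simp [hu, this, h]
    obtain ⟨p0, hp0⟩ : ∃ p, u p ≠ 0 := by
      by_contra hall
      push_neg at hall
      exact hne (funext fun p => by have := hall p; simp [hu] at this; linarith)
    have hFr : ∀ p, u p ≠ 0 → (0 < x p ∧ x p < c p) := by
      intro p hup
      have h0 : ¬ (x p = 0 ∨ x p = c p) := fun h => hup (hu0 p h)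
      push_neg at h0
      have := hbox x hxP p
      exact ⟨lt_of_le_of_ne this.1 (Ne.symm h0.1), lt_of_le_of_ne this.2 h0.2⟩
    set Fr : Finset ι := Finset.univ.filter (fun p => u p ≠ 0) with hFrdef
    have hFrne : Fr.Nonempty := ⟨p0, by simp [hFrdef, hp0]⟩
    set img := Fr.image (fun p => min (x p) (c p - x p) / (|u p| + 1)) with himg
    have himgne : img.Nonempty := hFrne.image _
    set η := img.min' himgne with hη
    have hηpos : 0 < η := by
      obtain ⟨p, hp, hpe⟩ := Finset.mem_image.mp (img.min'_mem himgne)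
      have hup : u p ≠ 0 := by simpa [hFrdef] using hp
      have := hFr p hup
      rw [hη, ← hpe]
      have : 0 < min (x p) (c p - x p) := lt_min this.1 (by linarith [this.2])
      positivity
    have hηb : ∀ p, η * |u p| ≤ min (x p) (c p - x p) ∨ u p = 0 := by
      intro p
      by_cases hup : u p = 0
      · right; exact hup
      · left
        have hpFr : p ∈ Fr := by simp [hFrdef, hup]
        have hle : η ≤ min (x p) (c p - x p) / (|u p| + 1) :=
          img.min'_le _ (Finset.mem_image_of_mem _ hpFr)
        have hpos : (0:ℝ) < |u p| + 1 := by positivity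
        have h2 : η * (|u p| + 1) ≤ min (x p) (c p - x p) := by
          rw [← le_div_iff₀ hpos]; exact hle
        nlinarith [abs_nonneg (u p), hηpos]
    have hmem : ∀ s : ℝ, |s| ≤ η → (fun p => x p + s * u p) ∈ P := by
      intro s hs
      apply hAff x hxP y hyP s
      intro p
      rcases hηb p with h | h
      · have habs : |s * u p| ≤ min (x p) (c p - x p) := by
          rw [abs_mul]
          calc |s| * |u p| ≤ η * |u p| := by
                apply mul_le_mul_of_nonneg_right hs (abs_nonneg _)
            _ ≤ _ := h
        have h1 := abs_le.mp habs
        have h2 := min_le_left (x p) (c p - x p)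
        have h3 := min_le_right (x p) (c p - x p)
        constructor <;> [skip; skip] <;> simp only [hu] at h1 ⊢ <;> nlinarith [h1.1, h1.2]
      · simp only [hu] at h ⊢
        rw [h]
        have := hbox x hxP p
        constructor <;> nlinarith [this.1, this.2]
    have hx1 : (fun p => x p + (-η) * u p) ∈ P := hmem (-η) (by rw [abs_neg, abs_of_pos hηpos])
    have hx2 : (fun p => x p + η * u p) ∈ P := hmem η (by rw [abs_of_pos hηpos])
    have hseg : x ∈ openSegment ℝ (fun p => x p + (-η) * u p) (fun p => x p + η * u p) := by
      refine ⟨1/2, 1/2, by norm_num, by norm_num, by norm_num, ?_⟩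
      funext p
      simp only [Pi.add_apply, Pi.smul_apply, smul_eq_mul]
      ring
    have := hx.2 hx1 hx2 hseg
    have h2 : x p0 + -η * u p0 = x p0 := congrFun this p0
    have : η * u p0 = 0 := by linarith [h2]
    rcases mul_eq_zero.mp this with h | h
    · exact absurd h (ne_of_gt hηpos)
    · exact hp0 h
  exact Finite.of_injective _ hinj

end Aux

section Main
open Finset
open scoped Classical
variable {ι : Type} [Fintype ι]

theorem abstract_main (P : Set (ι → ℝ)) (c a b : ι → ℝ)
    (ha : ∀ p, 0 ≤ a p) (hb : ∀ p, 0 ≤ b p)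
    (hbox : ∀ x ∈ P, ∀ p, 0 ≤ x p ∧ x p ≤ c p)
    (hclosed : IsClosed P)
    (hAff : ∀ x ∈ P, ∀ y ∈ P, ∀ s : ℝ,
      (∀ p, 0 ≤ x p + s * (y p - x p) ∧ x p + s * (y p - x p) ≤ c p) →
      (fun p => x p + s * (y p - x p)) ∈ P)
    (fopt : ι → ℝ) (hf : fopt ∈ P)
    (hmin : ∀ g ∈ P, Gcost a b fopt ≤ Gcost a b g) :
    ∃ t : ι → ℝ, (∀ p, 0 < a p → 0 < t p) ∧ (∀ p, ¬ 0 < a p → t p = 0) ∧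
      ∀ g ∈ P, (∀ g' ∈ P, Lin (fun p => t p + b p) g ≤ Lin (fun p => t p + b p) g') →
        ∀ g' ∈ P, Gcost a b g ≤ Gcost a b g' := by
  classical
  have hconv : Convex ℝ P := by
    intro x hx y hy α β hα hβ hαβ
    have hbnd : ∀ p, 0 ≤ x p + β * (y p - x p) ∧ x p + β * (y p - x p) ≤ c p := by
      intro p
      have h1 := hbox x hx p
      have h2 := hbox y hy p
      constructor <;> nlinarith [h1.1, h1.2, h2.1, h2.2]
    have := hAff x hx y hy β hbnd
    convert this using 1
    funext p
    simp only [Pi.add_apply, Pi.smul_apply, smul_eq_mul]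
    have : α = 1 - β := by linarith
    rw [this]; ring
  have hcomp : IsCompact P := by
    refine IsCompact.of_isClosed_subset
      (isCompact_univ_pi (fun p => isCompact_Icc (a := (0:ℝ)) (b := c p))) hclosed ?_
    intro x hx
    simp only [Set.mem_univ_pi, Set.mem_Icc]
    exact fun p => hbox x hx p
  set Vert := Set.extremePoints ℝ P with hVert
  have hVsub : Vert ⊆ P := extremePoints_subset
  have hVfin : Vert.Finite := extremePoints_finite P c hbox hAff
  have hKM : P = convexHull ℝ Vert := by
    have h1 := closure_convexHull_extremePoints hcomp hconv
    rw [IsClosed.closure_eq (hVfin.isClosed_convexHull (𝕜 := ℝ))] at h1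
    exact h1.symm
  have decomp : ∀ x ∈ P, ∃ (κ : Type) (tt : Finset κ) (wt : κ → ℝ) (z : κ → ι → ℝ),
      (∀ i ∈ tt, 0 ≤ wt i) ∧ (∑ i ∈ tt, wt i = 1) ∧ (∀ i ∈ tt, z i ∈ Vert) ∧
      (∀ p, x p = ∑ i ∈ tt, wt i * z i p) := by
    intro x hx
    rw [hKM, _root_.convexHull_eq] at hx
    obtain ⟨κ, tt, wt, z, hw0, hw1, hz, hcm⟩ := hx
    refine ⟨κ, tt, wt, z, hw0, hw1, hz, ?_⟩
    intro p
    rw [← hcm, Finset.centerMass_eq_of_sum_1 _ _ hw1]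
    simp [Finset.sum_apply]
  have hcoord : ∀ x ∈ P, ∀ p, 0 ≤ x p := fun x hx p => (hbox x hx p).1
  have cost_combo : ∀ (κ : Type) (tt : Finset κ) (wt : κ → ℝ) (z : κ → ι → ℝ) (x : ι → ℝ),
      (∀ i ∈ tt, 0 ≤ wt i) → (∑ i ∈ tt, wt i = 1) → (∀ i ∈ tt, z i ∈ P) →
      (∀ p, x p = ∑ i ∈ tt, wt i * z i p) →
      ∑ i ∈ tt, wt i * Gcost a b (z i) ≤ Gcost a b x := by
    intro κ tt wt z x hw0 hw1 hzP hx
    have hsupp : ∀ i ∈ tt, 0 < wt i → Aco a (z i) ≤ Aco a x := by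
      intro i hi hwi
      apply Finset.sum_le_sum_of_subset_of_nonneg
      · intro p hp
        rw [mem_Spt] at hp ⊢
        refine ⟨?_, hp.2⟩
        rw [hx p]
        calc (0:ℝ) < wt i * z i p := mul_pos hwi hp.1
          _ ≤ ∑ j ∈ tt, wt j * z j p := by
              apply Finset.single_le_sum (f := fun j => wt j * z j p) ?_ hi
              intro j hj
              exact mul_nonneg (hw0 j hj) (hcoord (z j) (hzP j hj) p)
      · intro p _ _; exact ha p
    calc ∑ i ∈ tt, wt i * Gcost a b (z i)
        = ∑ i ∈ tt, (wt i * Aco a (z i) + wt i * Lin b (z i)) := by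
          apply Finset.sum_congr rfl; intro i _; unfold Gcost; ring
      _ ≤ ∑ i ∈ tt, (wt i * Aco a x + wt i * Lin b (z i)) := by
          apply Finset.sum_le_sum
          intro i hi
          rcases lt_or_eq_of_le (hw0 i hi) with h | h
          · have := hsupp i hi h
            nlinarith
          · rw [← h]; simp
      _ = Aco a x + Lin b x := by
          rw [Finset.sum_add_distrib, ← Finset.sum_mul, hw1, one_mul,
            Lin_combo tt wt z b x hx]
      _ = Gcost a b x := rfl
  have hVne : Vert.Nonempty := by
    by_contra h
    rw [Set.not_nonempty_iff_eq_empty] at h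
    rw [hKM, h] at hf
    simp at hf
  set VF : Finset (ι → ℝ) := hVfin.toFinset with hVF
  have hVFne : VF.Nonempty := by
    rwa [hVF, Set.Finite.toFinset_nonempty]
  have hVFP : ∀ v ∈ VF, v ∈ P := by
    intro v hv
    exact hVsub (hVfin.mem_toFinset.mp hv)
  obtain ⟨gs, hgsVF, hgsmin⟩ := VF.exists_min_image (Gcost a b) hVFne
  have hgsP : gs ∈ P := hVFP gs hgsVF
  have hM : Gcost a b gs = Gcost a b fopt := by
    refine le_antisymm ?_ (hmin gs hgsP)
    obtain ⟨κ, tt, wt, z, hw0, hw1, hz, hfx⟩ := decomp fopt hf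
    have h1 : ∑ i ∈ tt, wt i * Gcost a b (z i) ≤ Gcost a b fopt :=
      cost_combo κ tt wt z fopt hw0 hw1 (fun i hi => hVsub (hz i hi)) hfx
    calc Gcost a b gs = ∑ i ∈ tt, wt i * Gcost a b gs := by
          rw [← Finset.sum_mul, hw1, one_mul]
      _ ≤ ∑ i ∈ tt, wt i * Gcost a b (z i) := by
          apply Finset.sum_le_sum
          intro i hi
          exact mul_le_mul_of_nonneg_left
            (hgsmin (z i) (hVfin.mem_toFinset.mpr (hz i hi))) (hw0 i hi)
      _ ≤ Gcost a b fopt := h1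
  -- constants
  set Bc : ℝ := ∑ p, c p with hBc
  have hc0 : ∀ p, 0 ≤ c p := fun p => le_trans (hbox fopt hf p).1 (hbox fopt hf p).2
  have hBc0 : 0 ≤ Bc := Finset.sum_nonneg fun p _ => hc0 p
  set Dplus : Finset (ι → ℝ) := VF.filter (fun v => Lin b gs < Lin b v) with hDp
  set ε : ℝ := if h : Dplus.Nonempty then
      ((Dplus.image (fun v => Lin b v - Lin b gs)).min' (h.image (fun v => Lin b v - Lin b gs))) / (2*(Bc+1)) else 1 with hεdef
  have hεpos : 0 < ε := by
    rw [hεdef]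
    split_ifs with h
    · apply div_pos ?_ (by linarith)
      obtain ⟨v, hv, hve⟩ := Finset.mem_image.mp ((Dplus.image (fun v => Lin b v - Lin b gs)).min'_mem (h.image (fun v => Lin b v - Lin b gs)))
      rw [← hve]
      have : Lin b gs < Lin b v := (Finset.mem_filter.mp hv).2
      linarith
    · norm_num
  have hεA : ∀ v ∈ VF, Lin b gs < Lin b v → ε * Bc < Lin b v - Lin b gs := by
    intro v hv hlt
    have hvD : v ∈ Dplus := Finset.mem_filter.mpr ⟨hv, hlt⟩
    have hne : Dplus.Nonempty := ⟨v, hvD⟩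
    have hminle : (Dplus.image (fun v => Lin b v - Lin b gs)).min' (hne.image (fun v => Lin b v - Lin b gs))
        ≤ Lin b v - Lin b gs :=
      Finset.min'_le _ _ (Finset.mem_image_of_mem _ hvD)
    have hminpos : 0 < (Dplus.image (fun v => Lin b v - Lin b gs)).min' (hne.image (fun v => Lin b v - Lin b gs)) := by
      obtain ⟨u, hu, hue⟩ := Finset.mem_image.mp ((Dplus.image (fun v => Lin b v - Lin b gs)).min'_mem (hne.image (fun v => Lin b v - Lin b gs)))
      rw [← hue]
      have : Lin b gs < Lin b u := (Finset.mem_filter.mp hu).2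
      linarith
    rw [hεdef, dif_pos hne]
    have key : ∀ δm : ℝ, 0 < δm → δm ≤ Lin b v - Lin b gs →
        δm / (2*(Bc+1)) * Bc < Lin b v - Lin b gs := by
      intro δm h1 h2
      rw [div_mul_eq_mul_div, div_lt_iff₀ (by linarith)]
      nlinarith
    exact key _ hminpos hminle
  set PS : Finset ((ι → ℝ) × ι) := (VF ×ˢ Finset.univ).filter (fun q => 0 < q.1 q.2) with hPS
  set γ : ℝ := if h : PS.Nonempty then (PS.image (fun q => q.1 q.2)).min' (h.image (fun q => q.1 q.2)) else 1
    with hγdef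
  have hγpos : 0 < γ := by
    rw [hγdef]; split_ifs with h
    · obtain ⟨q, hq, hqe⟩ := Finset.mem_image.mp ((PS.image (fun q => q.1 q.2)).min'_mem (h.image (fun q => q.1 q.2)))
      rw [← hqe]; exact (Finset.mem_filter.mp hq).2
    · norm_num
  have hγle : ∀ v ∈ VF, ∀ p, 0 < v p → γ ≤ v p := by
    intro v hv p hp
    have hq : (v, p) ∈ PS :=
      Finset.mem_filter.mpr ⟨Finset.mem_product.mpr ⟨hv, Finset.mem_univ p⟩, hp⟩
    have hne : PS.Nonempty := ⟨_, hq⟩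
    rw [hγdef, dif_pos hne]
    exact Finset.min'_le _ _ (Finset.mem_image_of_mem _ hq)
  set Δ : ℝ := ((VF.image (fun v => Lin b gs - Lin b v)).max' (hVFne.image (fun v => Lin b gs - Lin b v))) ⊔ 0 with hΔdef
  have hΔ0 : 0 ≤ Δ := le_sup_right
  have hΔle : ∀ v ∈ VF, Lin b gs - Lin b v ≤ Δ := by
    intro v hv
    exact le_trans (Finset.le_max' _ (Lin b gs - Lin b v) (Finset.mem_image_of_mem (fun v => Lin b gs - Lin b v) hv)) le_sup_left
  set N : ℝ := (ε * Bc + Δ + 1) / γ with hNdef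
  have hNγ : N * γ = ε * Bc + Δ + 1 := by
    rw [hNdef, div_mul_cancel₀]
    exact ne_of_gt hγpos
  have hNpos : 0 < N := by
    apply div_pos ?_ hγpos
    nlinarith
  set t : ι → ℝ := fun p => if 0 < a p then (if 0 < gs p then ε else N) else 0 with htdef
  have ht_pos : ∀ p, 0 < a p → 0 < t p := by
    intro p hp; rw [htdef]; dsimp only; rw [if_pos hp]
    split_ifs
    · exact hεpos
    · exact hNpos
  have ht_zero : ∀ p, ¬ 0 < a p → t p = 0 := by
    intro p hp; rw [htdef]; dsimp only; rw [if_neg hp]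
  set W : (ι → ℝ) → ℝ := Lin (fun p => t p + b p) with hWdef
  have hWsplit : ∀ v x : ι → ℝ, W v - W x = (∑ p, t p * (v p - x p)) + (Lin b v - Lin b x) := by
    intro v x
    rw [hWdef]
    unfold Lin
    rw [← Finset.sum_sub_distrib, ← Finset.sum_sub_distrib, ← Finset.sum_add_distrib]
    apply Finset.sum_congr rfl; intro p _; ring
  have hterm : ∀ v ∈ P, ∀ p, -(ε * c p) ≤ t p * (v p - gs p) := by
    intro v hv p
    have hvb := hbox v hv p
    have hgb := hbox gs hgsP p
    have hcp := hc0 p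
    rw [htdef]; dsimp only
    by_cases hap : 0 < a p
    · rw [if_pos hap]
      by_cases hgp : 0 < gs p
      · rw [if_pos hgp]
        nlinarith [hvb.1, hgb.2, hεpos]
      · rw [if_neg hgp]
        have hg0 : gs p = 0 := le_antisymm (not_lt.mp hgp) hgb.1
        rw [hg0]
        nlinarith [hvb.1, hNpos, hεpos]
    · rw [if_neg hap]
      nlinarith [hεpos]
  have htsum : ∀ v ∈ P, -(ε * Bc) ≤ ∑ p, t p * (v p - gs p) := by
    intro v hv
    have h1 : ∑ p, -(ε * c p) ≤ ∑ p, t p * (v p - gs p) :=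
      Finset.sum_le_sum (fun p _ => hterm v hv p)
    have h2 : -(ε * Bc) = ∑ p, -(ε * c p) := by
      rw [hBc, Finset.mul_sum, ← Finset.sum_neg_distrib]
    linarith
  have hKey : ∀ v ∈ VF, ¬ (Lin b v = Lin b gs ∧ Spt a v = Spt a gs) → W gs < W v := by
    intro v hvVF hnotC
    have hvP : v ∈ P := hVFP v hvVF
    have hsplit := hWsplit v gs
    rcases lt_or_ge 0 (Lin b v - Lin b gs) with hδpos | hδnonpos
    · have h1 := htsum v hvP
      have h2 := hεA v hvVF (by linarith)
      linarith
    · have hdich : ∃ p0, 0 < v p0 ∧ 0 < a p0 ∧ gs p0 = 0 := by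
        by_contra hno
        push_neg at hno
        have hsub : Spt a v ⊆ Spt a gs := by
          intro p hp
          rw [mem_Spt] at hp ⊢
          have hgp : gs p ≠ 0 := hno p hp.1 hp.2
          exact ⟨lt_of_le_of_ne (hbox gs hgsP p).1 (Ne.symm hgp), hp.2⟩
        have hAle : Aco a v ≤ Aco a gs := by
          apply Finset.sum_le_sum_of_subset_of_nonneg hsub
          intro p _ _; exact ha p
        have hge : Aco a gs + Lin b gs ≤ Aco a v + Lin b v := by
          have : Gcost a b gs ≤ Gcost a b v := by
            rw [hM]; exact hmin v hvP
          exact this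
        have hAeq : Aco a v = Aco a gs := by linarith
        have hLeq : Lin b v = Lin b gs := by linarith
        have hsd := Finset.sum_sdiff (f := a) hsub
        have hzero : ∑ p ∈ Spt a gs \ Spt a v, a p = 0 := by
          have h1 : Aco a v = ∑ p ∈ Spt a v, a p := rfl
          have h2 : Aco a gs = ∑ p ∈ Spt a gs, a p := rfl
          linarith
        have hempty : Spt a gs \ Spt a v = ∅ := by
          by_contra hne2
          obtain ⟨p, hp⟩ := Finset.nonempty_iff_ne_empty.mpr hne2
          have hpS : p ∈ Spt a gs := (Finset.mem_sdiff.mp hp).1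
          have hap : 0 < a p := (mem_Spt.mp hpS).2
          have : 0 < ∑ p ∈ Spt a gs \ Spt a v, a p :=
            Finset.sum_pos' (fun q _ => ha q) ⟨p, hp, hap⟩
          linarith
        exact hnotC ⟨hLeq,
          Finset.Subset.antisymm hsub (Finset.sdiff_eq_empty_iff_subset.mp hempty)⟩
      obtain ⟨p0, hp0v, hp0a, hp0gs⟩ := hdich
      have hsplit0 : ∑ p, t p * (v p - gs p)
          = t p0 * (v p0 - gs p0) + ∑ p ∈ Finset.univ.erase p0, t p * (v p - gs p) :=
        (Finset.add_sum_erase _ _ (Finset.mem_univ p0)).symm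
      have hrest : -(ε * Bc) ≤ ∑ p ∈ Finset.univ.erase p0, t p * (v p - gs p) := by
        have h1 : ∑ p ∈ Finset.univ.erase p0, -(ε * c p)
            ≤ ∑ p ∈ Finset.univ.erase p0, t p * (v p - gs p) :=
          Finset.sum_le_sum fun p _ => hterm v hvP p
        have h3 : ∑ p ∈ Finset.univ.erase p0, c p ≤ Bc := by
          rw [hBc]
          apply Finset.sum_le_sum_of_subset_of_nonneg (Finset.erase_subset _ _)
          intro p _ _; exact hc0 p
        have h4 : ∑ p ∈ Finset.univ.erase p0, -(ε * c p)
            = -(ε * ∑ p ∈ Finset.univ.erase p0, c p) := by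
          rw [Finset.mul_sum, ← Finset.sum_neg_distrib]
        nlinarith [hεpos]
      have hterm0 : N * γ ≤ t p0 * (v p0 - gs p0) := by
        have htp0 : t p0 = N := by
          rw [htdef]; dsimp only
          rw [if_pos hp0a, if_neg (by rw [hp0gs]; exact lt_irrefl 0)]
        rw [htp0, hp0gs, sub_zero]
        exact mul_le_mul_of_nonneg_left (hγle v hvVF p0 hp0v) (le_of_lt hNpos)
      have hδb : -Δ ≤ Lin b v - Lin b gs := by
        have := hΔle v hvVF; linarith
      linarith [hNγ]
  refine ⟨t, ht_pos, ht_zero, ?_⟩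
  intro g hgP hgmin g' hg'P
  have hWgs : W g ≤ W gs := hgmin gs hgsP
  obtain ⟨κ, tt, wt, z, hw0, hw1, hzV, hgeq⟩ := decomp g hgP
  have hWcombo : W g = ∑ i ∈ tt, wt i * W (z i) := Lin_combo tt wt z _ g hgeq
  have hWzge : ∀ i ∈ tt, W g ≤ W (z i) := fun i hi => hgmin (z i) (hVsub (hzV i hi))
  have hzero : ∀ i ∈ tt, wt i * (W (z i) - W g) = 0 := by
    have hsum0 : ∑ i ∈ tt, wt i * (W (z i) - W g) = 0 := by
      have h5 : ∑ i ∈ tt, wt i * (W (z i) - W g)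
          = (∑ i ∈ tt, wt i * W (z i)) - (∑ i ∈ tt, wt i) * W g := by
        rw [Finset.sum_mul, ← Finset.sum_sub_distrib]
        apply Finset.sum_congr rfl; intro i _; ring
      rw [h5, hw1, one_mul, ← hWcombo, sub_self]
    intro i hi
    refine (Finset.sum_eq_zero_iff_of_nonneg ?_).mp hsum0 i hi
    intro j hj
    exact mul_nonneg (hw0 j hj) (by linarith [hWzge j hj])
  have hC : ∀ i ∈ tt, 0 < wt i → Lin b (z i) = Lin b gs ∧ Spt a (z i) = Spt a gs := by
    intro i hi hwi
    by_contra hnc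
    have hzVF : z i ∈ VF := hVfin.mem_toFinset.mpr (hzV i hi)
    have hk := hKey (z i) hzVF hnc
    have hWz : W (z i) = W g := by
      have h6 := hzero i hi
      rcases mul_eq_zero.mp h6 with h | h
      · exact absurd h (ne_of_gt hwi)
      · linarith
    linarith [hWgs]
  have hLb : Lin b g = Lin b gs := by
    rw [Lin_combo tt wt z b g hgeq]
    have h7 : ∀ i ∈ tt, wt i * Lin b (z i) = wt i * Lin b gs := by
      intro i hi
      rcases lt_or_eq_of_le (hw0 i hi) with h | h
      · rw [(hC i hi h).1]
      · rw [← h]; ring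
    rw [Finset.sum_congr rfl h7, ← Finset.sum_mul, hw1, one_mul]
  have hSp : Spt a g = Spt a gs := by
    ext p
    rw [mem_Spt, mem_Spt]
    constructor
    · rintro ⟨hgp, hap⟩
      refine ⟨?_, hap⟩
      have hex : ∃ i ∈ tt, 0 < wt i * z i p := by
        by_contra hno
        push_neg at hno
        have : g p ≤ 0 := by
          rw [hgeq p]
          exact Finset.sum_nonpos hno
        linarith
      obtain ⟨i, hi, hpos⟩ := hex
      have hwi : 0 < wt i := by
        rcases lt_or_eq_of_le (hw0 i hi) with h | h
        · exact h
        · rw [← h] at hpos; simp at hpos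
      have hzip : 0 < z i p := by
        by_contra hz
        push_neg at hz
        nlinarith
      have h8 := (hC i hi hwi).2
      have hmem : p ∈ Spt a (z i) := mem_Spt.mpr ⟨hzip, hap⟩
      rw [h8] at hmem
      exact (mem_Spt.mp hmem).1
    · rintro ⟨hgsp, hap⟩
      refine ⟨?_, hap⟩
      obtain ⟨i, hi, hwi⟩ : ∃ i ∈ tt, 0 < wt i := by
        by_contra hno
        push_neg at hno
        have h9 : ∑ i ∈ tt, wt i ≤ 0 := Finset.sum_nonpos hno
        rw [hw1] at h9; linarith
      have hmem : p ∈ Spt a (z i) := by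
        rw [(hC i hi hwi).2]; exact mem_Spt.mpr ⟨hgsp, hap⟩
      have hzip := (mem_Spt.mp hmem).1
      rw [hgeq p]
      calc (0:ℝ) < wt i * z i p := mul_pos hwi hzip
        _ ≤ ∑ j ∈ tt, wt j * z j p := Finset.single_le_sum (f := fun j => wt j * z j p)
            (fun j hj => mul_nonneg (hw0 j hj) (hcoord (z j) (hVsub (hzV j hj)) p)) hi
  have hGg : Gcost a b g = Gcost a b gs := by
    unfold Gcost Aco
    rw [hSp, hLb]
  rw [hGg, hM]
  exact hmin g' hg'P

end Main

section Final
open Finset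
open scoped Classical

lemma cost_eq_Gcost {V E K : Type} [Fintype V] [Fintype E] [Fintype K]
    (I : MCFCNF V E K) (f : E × K → ℝ) :
    I.cost f = Gcost I.a I.b f := by
  unfold MCFCNF.cost Gcost Lin MCFCNF.supp
  rw [sum_supp_eq_Aco I.a f I.a_nonneg]

/-- Theorem 1 of the paper: if an MC-FCNF instance admits an ILP-optimal valid flow,
then there is a choice of positive fixed-cost scaling parameters `d` such that every
valid flow minimizing the scaled cost `scost d` over all valid flows is ILP-optimal. -/
theorem exists_scaling_params_yielding_ilp_optimal
    {V E K : Type} [Fintype V] [Fintype E] [Fintype K]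
    (I : MCFCNF V E K) (fopt : E × K → ℝ)
    (hopt : I.IsValidFlow fopt)
    (hoptmin : ∀ g, I.IsValidFlow g → I.cost fopt ≤ I.cost g) :
    ∃ d : E × K → ℝ, (∀ p, 0 < d p) ∧
      ∀ g, I.IsValidFlow g →
        (∀ g', I.IsValidFlow g' → I.scost d g ≤ I.scost d g') →
        ∀ g', I.IsValidFlow g' → I.cost g ≤ I.cost g' := by
  classical
  set P : Set (E × K → ℝ) := {f | I.IsValidFlow f} with hP
  have hbox : ∀ x ∈ P, ∀ p : E × K, 0 ≤ x p ∧ x p ≤ I.c p.2 := fun x hx p => hx.1 p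
  have hcont : ∀ (S : Finset E), Continuous (fun f : E × K → ℝ => ∑ e ∈ S, ∑ k : K, f (e, k)) :=
    fun S => continuous_finset_sum _ fun e _ =>
      continuous_finset_sum _ fun k _ => continuous_apply (e, k)
  have hclosed : IsClosed P := by
    have h1 : IsClosed {f : E × K → ℝ | ∀ p : E × K, 0 ≤ f p ∧ f p ≤ I.c p.2} := by
      rw [Set.setOf_forall]
      refine isClosed_iInter fun p => ?_
      rw [Set.setOf_and]
      exact IsClosed.inter (isClosed_le continuous_const (continuous_apply p))
        (isClosed_le (continuous_apply p) continuous_const)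
    have h2 : IsClosed {f : E × K → ℝ | ∀ v : V, v ≠ I.s → v ≠ I.t →
        ∑ e ∈ Finset.univ.filter (fun e => I.src e = v), ∑ k : K, f (e, k) =
        ∑ e ∈ Finset.univ.filter (fun e => I.dst e = v), ∑ k : K, f (e, k)} := by
      rw [Set.setOf_forall]
      refine isClosed_iInter fun v => ?_
      by_cases h : v ≠ I.s ∧ v ≠ I.t
      · convert isClosed_eq (hcont (Finset.univ.filter (fun e => I.src e = v))) (hcont (Finset.univ.filter (fun e => I.dst e = v))) using 1
        ext f
        simp only [Set.mem_setOf_eq]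
        exact ⟨fun hf => hf h.1 h.2, fun hf _ _ => hf⟩
      · convert isClosed_univ using 1
        ext f
        simp only [Set.mem_setOf_eq, Set.mem_univ, iff_true]
        intro h1' h2'
        exact absurd ⟨h1', h2'⟩ h
    have h3 : IsClosed {f : E × K → ℝ |
        ∑ e ∈ Finset.univ.filter (fun e => I.src e = I.s), ∑ k : K, f (e, k) = I.T} :=
      isClosed_eq (hcont _) continuous_const
    have hPeq : P = {f : E × K → ℝ | ∀ p : E × K, 0 ≤ f p ∧ f p ≤ I.c p.2} ∩
        ({f : E × K → ℝ | ∀ v : V, v ≠ I.s → v ≠ I.t →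
          ∑ e ∈ Finset.univ.filter (fun e => I.src e = v), ∑ k : K, f (e, k) =
          ∑ e ∈ Finset.univ.filter (fun e => I.dst e = v), ∑ k : K, f (e, k)} ∩
         {f : E × K → ℝ |
          ∑ e ∈ Finset.univ.filter (fun e => I.src e = I.s), ∑ k : K, f (e, k) = I.T}) := by
      ext f
      constructor
      · intro hf
        exact ⟨hf.1, hf.2.1, hf.2.2⟩
      · intro hf
        exact ⟨hf.1, hf.2.1, hf.2.2⟩
    rw [hPeq]
    exact h1.inter (h2.inter h3)
  have hAff : ∀ x ∈ P, ∀ y ∈ P, ∀ s : ℝ,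
      (∀ p, 0 ≤ x p + s * (y p - x p) ∧ x p + s * (y p - x p) ≤ I.c p.2) →
      (fun p => x p + s * (y p - x p)) ∈ P := by
    intro x hx y hy s hbnd
    obtain ⟨hx1, hx2, hx3⟩ := hx
    obtain ⟨hy1, hy2, hy3⟩ := hy
    have hsum : ∀ S : Finset E,
        ∑ e ∈ S, ∑ k : K, (x (e, k) + s * (y (e, k) - x (e, k)))
        = (∑ e ∈ S, ∑ k : K, x (e, k))
          + s * ((∑ e ∈ S, ∑ k : K, y (e, k)) - (∑ e ∈ S, ∑ k : K, x (e, k))) := by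
      intro S
      rw [mul_sub, Finset.mul_sum, Finset.mul_sum, ← Finset.sum_sub_distrib,
        ← Finset.sum_add_distrib]
      apply Finset.sum_congr rfl
      intro e _
      rw [Finset.mul_sum, Finset.mul_sum, ← Finset.sum_sub_distrib, ← Finset.sum_add_distrib]
      apply Finset.sum_congr rfl
      intro k _
      ring
    refine ⟨hbnd, ?_, ?_⟩
    · intro v hvs hvt
      rw [hsum, hsum, hx2 v hvs hvt, hy2 v hvs hvt]
    · rw [hsum, hx3, hy3]
      ring
  obtain ⟨t, ht_pos, ht_zero, hmain⟩ := abstract_main P (fun p => I.c p.2) I.a I.b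
    I.a_nonneg I.b_nonneg hbox hclosed hAff fopt hopt
    (fun g hg => by rw [← cost_eq_Gcost, ← cost_eq_Gcost]; exact hoptmin g hg)
  refine ⟨fun p => if 0 < I.a p then I.a p / t p else 1, ?_, ?_⟩
  · intro p
    dsimp only
    split_ifs with h
    · exact div_pos h (ht_pos p h)
    · norm_num
  · intro g hg hgm g' hg'
    have hscost : ∀ x : E × K → ℝ,
        I.scost (fun p => if 0 < I.a p then I.a p / t p else 1) x
          = Lin (fun p => t p + I.b p) x := by
      intro x
      unfold MCFCNF.scost Lin
      apply Finset.sum_congr rfl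
      intro p _
      congr 1
      dsimp only
      split_ifs with h
      · have ha' : I.a p ≠ 0 := ne_of_gt h
        have ht' : t p ≠ 0 := ne_of_gt (ht_pos p h)
        field_simp
      · have ha0 : I.a p = 0 := le_antisymm (not_lt.mp h) (I.a_nonneg p)
        rw [ha0, ht_zero p h]
        norm_num
    rw [cost_eq_Gcost, cost_eq_Gcost]
    exact hmain g hg (fun g'' hg'' => by rw [← hscost, ← hscost]; exact hgm g'' hg'') g' hg'


end Final
end

section
/- Let f_opt be an ILP-optimal valid flow of an MC-FCNF instance, let H = supp(f_opt), and assume a(e,k) > 0 for every (e,k) ∈ H. If g is a valid flow with supp(g) ⊆ H that minimizes the variable cost over H among all valid flows supported in H, then supp(g) = H, i.e., g(e,k) > 0 for every (e,k) ∈ H. -/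
open Finset

open scoped Classical in
/-- If the fixed costs are positive on the support `H` of an ILP-optimal flow `f_opt`,
then any valid flow supported in `H` that minimizes the variable cost over `H` among
all valid flows supported in `H` has support exactly `H`. -/
theorem supp_eq_of_varcost_min_on_opt_support
    {V E K : Type} [Fintype V] [Fintype E] [Fintype K]
    (I : MCFCNF V E K) (fopt : E × K → ℝ)
    (hopt : I.IsValidFlow fopt)
    (hoptmin : ∀ g, I.IsValidFlow g → I.cost fopt ≤ I.cost g)
    (ha : ∀ p ∈ MCFCNF.supp fopt, 0 < I.a p)
    (g : E × K → ℝ) (hg : I.IsValidFlow g)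
    (hsupp : MCFCNF.supp g ⊆ MCFCNF.supp fopt)
    (hmin : ∀ g', I.IsValidFlow g' → MCFCNF.supp g' ⊆ MCFCNF.supp fopt →
      I.varcost (MCFCNF.supp fopt) g ≤ I.varcost (MCFCNF.supp fopt) g') :
    MCFCNF.supp g = MCFCNF.supp fopt := by
  classical
  set H := MCFCNF.supp fopt with hH
  apply Finset.Subset.antisymm hsupp
  intro p hp
  by_contra hpg
  -- zero values off support
  have hzero : ∀ (f : E × K → ℝ), (∀ q, 0 ≤ f q) → ∀ q, q ∉ MCFCNF.supp f → f q = 0 := by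
    intro f hf q hq
    simp only [MCFCNF.supp, Finset.mem_filter, Finset.mem_univ, true_and, not_lt] at hq
    exact le_antisymm hq (hf q)
  have hguniv : ∑ q : E × K, I.b q * g q = I.varcost H g := by
    unfold MCFCNF.varcost
    refine (Finset.sum_subset (Finset.subset_univ H) ?_).symm
    intro q _ hq
    have : g q = 0 := hzero g (fun q => (hg.1 q).1) q (fun h => hq (hsupp h))
    simp [this]
  have hfuniv : ∑ q : E × K, I.b q * fopt q = I.varcost H fopt := by
    unfold MCFCNF.varcost
    refine (Finset.sum_subset (Finset.subset_univ H) ?_).symm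
    intro q _ hq
    have : fopt q = 0 := hzero fopt (fun q => (hopt.1 q).1) q hq
    simp [this]
  have hvar : I.varcost H g ≤ I.varcost H fopt :=
    hmin fopt hopt (Finset.Subset.refl H)
  have hsub : MCFCNF.supp g ⊆ H.erase p := by
    intro q hq
    exact Finset.mem_erase.mpr ⟨fun h => hpg (h ▸ hq), hsupp hq⟩
  have h1 : ∑ q ∈ MCFCNF.supp g, I.a q ≤ ∑ q ∈ H.erase p, I.a q :=
    Finset.sum_le_sum_of_subset_of_nonneg hsub (fun q _ _ => I.a_nonneg q)
  have h2 : ∑ q ∈ H.erase p, I.a q + I.a p = ∑ q ∈ H, I.a q :=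
    Finset.sum_erase_add H _ hp
  have hap : 0 < I.a p := ha p hp
  have hcost : I.cost g < I.cost fopt := by
    unfold MCFCNF.cost
    rw [hguniv, hfuniv]
    linarith
  exact absurd (hoptmin g hg) (not_le.mpr hcost)
end

section
/- Let f_opt be an ILP-optimal valid flow of an MC-FCNF instance and let H = supp(f_opt). If g is a valid flow with supp(g) ⊆ H that minimizes the variable cost over H among all valid flows supported in H, then varcost_H(g) = varcost_H(f_opt), i.e., ∑_{(e,k) ∈ H} b(e,k)·g(e,k) = ∑_{(e,k) ∈ H} b(e,k)·f_opt(e,k). -/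
open Finset

open scoped Classical in
/-- If `g` is a valid flow supported in the support `H` of an ILP-optimal flow `f_opt`
that minimizes the variable cost over `H` among all valid flows supported in `H`,
then the variable cost of `g` over `H` equals that of `f_opt`. -/
theorem varcost_eq_of_varcost_min_on_opt_support
    {V E K : Type} [Fintype V] [Fintype E] [Fintype K]
    (I : MCFCNF V E K) (fopt : E × K → ℝ)
    (hopt : I.IsValidFlow fopt)
    (hoptmin : ∀ g, I.IsValidFlow g → I.cost fopt ≤ I.cost g)
    (g : E × K → ℝ) (hg : I.IsValidFlow g)
    (hsupp : MCFCNF.supp g ⊆ MCFCNF.supp fopt)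
    (hmin : ∀ g', I.IsValidFlow g' → MCFCNF.supp g' ⊆ MCFCNF.supp fopt →
      I.varcost (MCFCNF.supp fopt) g ≤ I.varcost (MCFCNF.supp fopt) g') :
    I.varcost (MCFCNF.supp fopt) g = I.varcost (MCFCNF.supp fopt) fopt := by
  classical
  set H := MCFCNF.supp fopt with hH
  -- total variable cost = variable cost over H, for flows supported in H
  have key : ∀ f : E × K → ℝ, (∀ p, 0 ≤ f p) → MCFCNF.supp f ⊆ H →
      ∑ p : E × K, I.b p * f p = ∑ p ∈ H, I.b p * f p := by
    intro f hf hs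
    symm
    apply Finset.sum_subset (Finset.subset_univ _)
    intro p _ hp
    have hpns : p ∉ MCFCNF.supp f := fun h => hp (hs h)
    have : ¬ 0 < f p := by
      simpa [MCFCNF.supp] using hpns
    have : f p = 0 := le_antisymm (not_lt.mp this) (hf p)
    simp [this]
  have hgnn : ∀ p, 0 ≤ g p := fun p => (hg.1 p).1
  have hfnn : ∀ p, 0 ≤ fopt p := fun p => (hopt.1 p).1
  have h1 : I.varcost H g ≤ I.varcost H fopt :=
    hmin fopt hopt (Finset.Subset.refl _)
  have hcost : I.cost fopt ≤ I.cost g := hoptmin g hg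
  have hfix : ∑ p ∈ MCFCNF.supp g, I.a p ≤ ∑ p ∈ H, I.a p :=
    Finset.sum_le_sum_of_subset_of_nonneg hsupp (fun p _ _ => I.a_nonneg p)
  have hg' : ∑ p : E × K, I.b p * g p = I.varcost H g := key g hgnn hsupp
  have hf' : ∑ p : E × K, I.b p * fopt p = I.varcost H fopt :=
    key fopt hfnn (Finset.Subset.refl _)
  have h2 : I.varcost H fopt ≤ I.varcost H g := by
    have : ∑ p ∈ H, I.a p + I.varcost H fopt ≤ ∑ p ∈ MCFCNF.supp g, I.a p + I.varcost H g := by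
      simpa [MCFCNF.cost, hg', hf', hH] using hcost
    linarith
  linarith
end

section
/- There exists an MC-FCNF instance with exactly one capacity type per edge (|K| = 1) and an ILP-optimal valid flow f_opt with f_opt(e,k) > 0 for every edge-capacity pair (e,k), such that some valid flow g that minimizes the scaled cost scost_d over all valid flows, where the scaling parameters are taken to be the optimal flow values d(e,k) = f_opt(e,k), satisfies cost(g) > cost(f_opt). (This disproves the claim that setting each scaling parameter equal to the optimal ILP flow value always yields an LP whose optimal flow is optimal for the ILP.) -/
open Finset

/-- The counterexample instance: three parallel edges from `s := false` to `t := true`,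
one capacity type of capacity 1, target flow 2, fixed costs `(0,1,0)` and variable
costs `(1,0,1)`. -/
noncomputable def Iex : MCFCNF Bool (Fin 3) Unit where
  src := fun _ => false
  dst := fun _ => true
  s := false
  t := true
  s_ne_t := by simp
  c := fun _ => 1
  c_nonneg := fun _ => zero_le_one
  a := fun p => if p.1 = 1 then 1 else 0
  a_nonneg := fun p => by split <;> norm_num
  b := fun p => if p.1 = 1 then 0 else 1
  b_nonneg := fun p => by split <;> norm_num
  T := 2
  T_nonneg := by norm_num

/-- The ILP-optimal flow `(1/2, 1, 1/2)`. -/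
noncomputable def foptEx : Fin 3 × Unit → ℝ := fun p => if p.1 = 1 then 1 else 1/2

/-- The alternative LP-optimal flow `(1, 1/2, 1/2)`. -/
noncomputable def gEx : Fin 3 × Unit → ℝ := fun p => if p.1 = 0 then 1 else 1/2

lemma sum_prod_three (f : Fin 3 × Unit → ℝ) :
    ∑ p : Fin 3 × Unit, f p = f (0, ()) + f (1, ()) + f (2, ()) := by
  rw [Fintype.sum_prod_type]
  simp [Fin.sum_univ_three]

lemma valid_sum {f : Fin 3 × Unit → ℝ} (h : Iex.IsValidFlow f) :
    f (0, ()) + f (1, ()) + f (2, ()) = 2 := by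
  have h2 := h.2.2
  simp only [Iex, Finset.filter_true_of_mem (fun e _ => rfl)] at h2
  simpa [Fin.sum_univ_three] using h2

lemma aex_eq (p : Fin 3 × Unit) :
    Iex.a p = if p = ((1 : Fin 3), ()) then 1 else 0 := by
  simp only [Iex]
  congr 1
  simp [Prod.ext_iff]

lemma cost_eq (f : Fin 3 × Unit → ℝ) :
    Iex.cost f = (if 0 < f (1, ()) then 1 else 0) + (f (0, ()) + f (2, ())) := by
  classical
  unfold MCFCNF.cost
  congr 1
  · rw [Finset.sum_congr rfl (fun p _ => aex_eq p), Finset.sum_ite_eq']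
    simp [MCFCNF.supp]
  · rw [sum_prod_three]
    simp [Iex]

lemma scost_eq {f : Fin 3 × Unit → ℝ} (h : Iex.IsValidFlow f) :
    Iex.scost foptEx f = 2 := by
  unfold MCFCNF.scost
  rw [sum_prod_three]
  have := valid_sum h
  simp only [Iex, foptEx]
  norm_num [show ((2:Fin 3)=1) ↔ False from by decide, show ((0:Fin 3)=1) ↔ False from by decide]
  linarith

lemma fopt_valid : Iex.IsValidFlow foptEx := by
  refine ⟨fun p => ?_, fun v hv1 hv2 => ?_, ?_⟩
  · simp only [foptEx, Iex]; split <;> norm_num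
  · cases v <;> simp [Iex] at hv1 hv2
  · simp only [Iex, Finset.filter_true_of_mem (fun e _ => rfl)]
    simp [Fin.sum_univ_three, foptEx]
    norm_num

lemma g_valid : Iex.IsValidFlow gEx := by
  refine ⟨fun p => ?_, fun v hv1 hv2 => ?_, ?_⟩
  · simp only [gEx, Iex]; split <;> norm_num
  · cases v <;> simp [Iex] at hv1 hv2
  · simp only [Iex, Finset.filter_true_of_mem (fun e _ => rfl)]
    simp [Fin.sum_univ_three, gEx]
    norm_num

/-- Counterexample to Claim 1 of the paper: there is an MC-FCNF instance with exactly
one capacity type per edge (`K = Unit`) and an ILP-optimal valid flow `f_opt` that is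
positive on every edge-capacity pair, such that some valid flow `g` minimizing the
scaled cost with scaling parameters `d = f_opt` has strictly larger true cost than
`f_opt`. -/
theorem claim_scaling_by_opt_flow_fails :
    ∃ (V E : Type) (iV : Fintype V) (iE : Fintype E)
      (I : @MCFCNF V E Unit iV iE _) (fopt g : E × Unit → ℝ),
      @MCFCNF.IsValidFlow V E Unit iV iE _ I fopt ∧
      (∀ g', @MCFCNF.IsValidFlow V E Unit iV iE _ I g' →
        @MCFCNF.cost V E Unit iV iE _ I fopt ≤ @MCFCNF.cost V E Unit iV iE _ I g') ∧
      (∀ p : E × Unit, 0 < fopt p) ∧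
      @MCFCNF.IsValidFlow V E Unit iV iE _ I g ∧
      (∀ g', @MCFCNF.IsValidFlow V E Unit iV iE _ I g' →
        @MCFCNF.scost V E Unit iV iE _ I fopt g ≤
          @MCFCNF.scost V E Unit iV iE _ I fopt g') ∧
      @MCFCNF.cost V E Unit iV iE _ I fopt < @MCFCNF.cost V E Unit iV iE _ I g := by
  refine ⟨Bool, Fin 3, inferInstance, inferInstance, Iex, foptEx, gEx,
    fopt_valid, ?_, ?_, g_valid, ?_, ?_⟩
  · -- ILP optimality of fopt
    intro g' hg'
    have hsum := valid_sum hg'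
    have hb := (hg'.1 (1, ())).2
    have hb' : g' (1, ()) ≤ 1 := by simpa [Iex] using hb
    rw [cost_eq, cost_eq]
    simp only [foptEx]
    norm_num [show ((2:Fin 3)=1) ↔ False from by decide, show ((0:Fin 3)=1) ↔ False from by decide]
    by_cases hy : 0 < g' (1, ())
    · rw [if_pos hy]; linarith
    · rw [if_neg hy]
      have := (hg'.1 (1, ())).1
      have : g' (1, ()) = 0 := le_antisymm (not_lt.mp hy) this
      linarith
  · -- fopt positive
    intro p
    simp only [foptEx]; split <;> norm_num
  · -- g minimizes scost
    intro g' hg'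
    rw [scost_eq g_valid, scost_eq hg']
  · -- cost fopt < cost g
    rw [cost_eq, cost_eq]
    simp only [foptEx, gEx]
    norm_num [show ((2:Fin 3)=1) ↔ False from by decide, show ((0:Fin 3)=1) ↔ False from by decide,
      show ((2:Fin 3)=0) ↔ False from by decide, show ((1:Fin 3)=0) ↔ False from by decide]
end

section
/- Let f_opt be an ILP-optimal valid flow of an MC-FCNF instance, let H = supp(f_opt), and assume a(e,k) > 0 for every (e,k) ∉ H. Then for every M > 0 there exists ε₀ > 0 such that for all ε with 0 < ε ≤ ε₀, if d : E × K → ℝ is defined by d(e,k) = M for (e,k) ∈ H and d(e,k) = ε for (e,k) ∉ H, then every valid flow g minimizing the scaled cost scost_d over all valid flows satisfies supp(g) ⊆ H. (Setting the scaling parameter near zero on off-support edges makes them prohibitively expensive for the LP, since a valid solution avoiding them exists.) -/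
open Finset

theorem extremePoints_polyhedron_finite {n ι : Type} [Fintype n] [Fintype ι]
    (w : ι → n → ℝ) (b : ι → ℝ) :
    (Set.extremePoints ℝ {x : n → ℝ | ∀ i, ∑ j, w i j * x j ≤ b i}).Finite := by
  classical
  set s := {x : n → ℝ | ∀ i, ∑ j, w i j * x j ≤ b i} with hsdef
  have key : Set.InjOn (fun x : n → ℝ => Finset.univ.filter fun i => ∑ j, w i j * x j = b i)
      (Set.extremePoints ℝ s) := by
    intro x hx y hy hxy
    by_contra hne
    set v : n → ℝ := fun j => y j - x j with hv
    have hvne : ∃ j, v j ≠ 0 := by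
      by_contra h
      push_neg at h
      exact hne (funext fun j => by have := h j; simp only [hv] at this; linarith)
    have htight : ∀ i, (∑ j, w i j * x j = b i) ↔ (∑ j, w i j * y j = b i) := by
      intro i
      have := Finset.ext_iff.mp hxy i
      simpa using this
    have hvz : ∀ i, ∑ j, w i j * x j = b i → ∑ j, w i j * v j = 0 := by
      intro i hi
      have hyi := (htight i).mp hi
      have hsub : ∑ j, w i j * v j = ∑ j, w i j * y j - ∑ j, w i j * x j := by
        rw [← Finset.sum_sub_distrib]
        exact Finset.sum_congr rfl fun j _ => by simp only [hv]; ring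
      rw [hsub, hi, hyi, sub_self]
    set S : Finset ι := Finset.univ.filter (fun i => ¬ ∑ j, w i j * x j = b i) with hS
    set f : ι → ℝ := fun i => (b i - ∑ j, w i j * x j) / (|∑ j, w i j * v j| + 1) with hf
    set t : ℝ := if hSn : S.Nonempty then min 1 (S.inf' hSn f) else 1 with ht
    have hxs : x ∈ s := hx.1
    have hfpos : ∀ i ∈ S, 0 < f i := by
      intro i hi
      have h1 : ∑ j, w i j * x j ≤ b i := hxs i
      have h2 : ¬ ∑ j, w i j * x j = b i := by
        have := Finset.mem_filter.mp hi
        exact this.2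
      have h3 : 0 < b i - ∑ j, w i j * x j := by
        rcases lt_or_eq_of_le h1 with h | h
        · linarith
        · exact absurd h h2
      exact div_pos h3 (by positivity)
    have ht0 : 0 < t := by
      rw [ht]
      split_ifs with hSn
      · exact lt_min one_pos ((Finset.lt_inf'_iff hSn).mpr hfpos)
      · norm_num
    have htle : ∀ i ∈ S, t * |∑ j, w i j * v j| ≤ b i - ∑ j, w i j * x j := by
      intro i hi
      have hfi : t ≤ f i := by
        rw [ht, dif_pos ⟨i, hi⟩]
        exact le_trans (min_le_right _ _) (Finset.inf'_le f hi)
      have h1 : 0 ≤ |∑ j, w i j * v j| := abs_nonneg _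
      have h3 : 0 < b i - ∑ j, w i j * x j := by
        have ha1 : ∑ j, w i j * x j ≤ b i := hxs i
        have ha2 : ¬ ∑ j, w i j * x j = b i := (Finset.mem_filter.mp hi).2
        rcases lt_or_eq_of_le ha1 with h | h
        · linarith
        · exact absurd h ha2
      calc t * |∑ j, w i j * v j| ≤ f i * |∑ j, w i j * v j| :=
            mul_le_mul_of_nonneg_right hfi h1
        _ ≤ b i - ∑ j, w i j * x j := by
            rw [hf, div_mul_eq_mul_div, div_le_iff₀ (by positivity)]
            nlinarith
    have hdot : ∀ (σ : ℝ) (z : n → ℝ) (i : ι),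
        ∑ j, w i j * (z j + σ * v j) = ∑ j, w i j * z j + σ * ∑ j, w i j * v j := by
      intro σ z i
      rw [Finset.mul_sum, ← Finset.sum_add_distrib]
      exact Finset.sum_congr rfl fun j _ => by ring
    have hmem : ∀ σ : ℝ, |σ| ≤ t → (fun j => x j + σ * v j) ∈ s := by
      intro σ hσ i
      rw [hdot]
      by_cases hi : ∑ j, w i j * x j = b i
      · rw [hvz i hi, mul_zero, add_zero]
        exact le_of_eq hi
      · have hiS : i ∈ S := Finset.mem_filter.mpr ⟨Finset.mem_univ _, hi⟩
        have h2 : σ * ∑ j, w i j * v j ≤ |σ| * |∑ j, w i j * v j| := by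
          calc σ * ∑ j, w i j * v j ≤ |σ * ∑ j, w i j * v j| := le_abs_self _
            _ = |σ| * |∑ j, w i j * v j| := abs_mul _ _
        have h3 : |σ| * |∑ j, w i j * v j| ≤ t * |∑ j, w i j * v j| :=
          mul_le_mul_of_nonneg_right hσ (abs_nonneg _)
        have h4 := htle i hiS
        have h5 := hxs i
        linarith
    have hp : (fun j => x j + (-t) * v j) ∈ s := hmem (-t) (by rw [abs_neg, abs_of_pos ht0])
    have hq : (fun j => x j + t * v j) ∈ s := hmem t (by rw [abs_of_pos ht0])
    have hseg : x ∈ openSegment ℝ (fun j => x j + (-t) * v j) (fun j => x j + t * v j) := by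
      refine ⟨1/2, 1/2, by norm_num, by norm_num, by norm_num, ?_⟩
      funext j
      simp only [Pi.add_apply, Pi.smul_apply, smul_eq_mul]
      ring
    obtain ⟨h1, h2⟩ := (mem_extremePoints.mp hx).2 _ hp _ hq hseg
    obtain ⟨j, hj⟩ := hvne
    have h3 : x j + t * v j = x j := congrFun h2 j
    have : t * v j = 0 := by linarith
    rcases mul_eq_zero.mp this with h | h
    · exact absurd h (ne_of_gt ht0)
    · exact hj h
  exact Set.Finite.of_finite_image (Set.toFinite _) key
section PolyRep

open scoped Classical

variable {V E K : Type} [Fintype V] [Fintype E] [Fintype K]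

private lemma sum_single_mul (p : E × K) (r : ℝ) (x : E × K → ℝ) :
    ∑ j : E × K, (if j = p then r else 0) * x j = r * x p := by
  rw [Finset.sum_eq_single p]
  · rw [if_pos rfl]
  · intro j _ hj
    rw [if_neg hj, zero_mul]
  · intro h
    exact absurd (Finset.mem_univ p) h

private lemma sum_indicator_mul (q : E → Prop) (x : E × K → ℝ) :
    ∑ j : E × K, (if q j.1 then (1 : ℝ) else 0) * x j
      = ∑ e ∈ Finset.univ.filter (fun e => q e), ∑ k : K, x (e, k) := by
  rw [Fintype.sum_prod_type, Finset.sum_filter]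
  refine Finset.sum_congr rfl fun e _ => ?_
  by_cases hq : q e <;> simp [hq]

theorem MCFCNF.exists_polyrep (I : MCFCNF V E K) :
    ∃ (ι : Type) (_ : Fintype ι) (w : ι → E × K → ℝ) (b : ι → ℝ),
      ∀ x : E × K → ℝ, I.IsValidFlow x ↔ ∀ i, ∑ j, w i j * x j ≤ b i := by
  classical
  refine ⟨((E × K) ⊕ (E × K)) ⊕ ((V ⊕ V) ⊕ Bool), inferInstance,
    (fun i => match i with
      | Sum.inl (Sum.inl p) => fun j => if j = p then (-1 : ℝ) else 0
      | Sum.inl (Sum.inr p) => fun j => if j = p then (1 : ℝ) else 0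
      | Sum.inr (Sum.inl (Sum.inl v)) => fun j =>
          if v = I.s ∨ v = I.t then 0
          else (if I.src j.1 = v then (1 : ℝ) else 0) - (if I.dst j.1 = v then (1 : ℝ) else 0)
      | Sum.inr (Sum.inl (Sum.inr v)) => fun j =>
          if v = I.s ∨ v = I.t then 0
          else (if I.dst j.1 = v then (1 : ℝ) else 0) - (if I.src j.1 = v then (1 : ℝ) else 0)
      | Sum.inr (Sum.inr true) => fun j => if I.src j.1 = I.s then (1 : ℝ) else 0
      | Sum.inr (Sum.inr false) => fun j => -(if I.src j.1 = I.s then (1 : ℝ) else 0)),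
    (fun i => match i with
      | Sum.inl (Sum.inl _) => 0
      | Sum.inl (Sum.inr p) => I.c p.2
      | Sum.inr (Sum.inl _) => 0
      | Sum.inr (Sum.inr true) => I.T
      | Sum.inr (Sum.inr false) => -I.T), fun x => ?_⟩
  have hdiff : ∀ (q q' : E → Prop) (x : E × K → ℝ),
      ∑ j : E × K, ((if q j.1 then (1:ℝ) else 0) - (if q' j.1 then (1:ℝ) else 0)) * x j
        = (∑ e ∈ Finset.univ.filter (fun e => q e), ∑ k : K, x (e, k))
          - (∑ e ∈ Finset.univ.filter (fun e => q' e), ∑ k : K, x (e, k)) := by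
    intro q q' x
    rw [← sum_indicator_mul q x, ← sum_indicator_mul q' x, ← Finset.sum_sub_distrib]
    exact Finset.sum_congr rfl fun j _ => by ring
  have hneg : ∀ (q : E → Prop) (x : E × K → ℝ),
      ∑ j : E × K, -(if q j.1 then (1:ℝ) else 0) * x j
        = -∑ j : E × K, (if q j.1 then (1:ℝ) else 0) * x j := by
    intro q x
    rw [← Finset.sum_neg_distrib]
    exact Finset.sum_congr rfl fun j _ => by ring
  constructor
  · rintro ⟨hbox, hcons, htgt⟩ i
    match i with
    | Sum.inl (Sum.inl p) =>
      dsimp only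
      rw [sum_single_mul]
      have := (hbox p).1
      simp only [neg_one_mul]
      linarith
    | Sum.inl (Sum.inr p) =>
      dsimp only
      rw [sum_single_mul, one_mul]
      exact (hbox p).2
    | Sum.inr (Sum.inl (Sum.inl v)) =>
      dsimp only
      by_cases hv : v = I.s ∨ v = I.t
      · simp [hv]
      · push_neg at hv
        simp only [if_neg (not_or.mpr hv)]
        rw [hdiff (fun e => I.src e = v) (fun e => I.dst e = v) x, hcons v hv.1 hv.2]
        simp
    | Sum.inr (Sum.inl (Sum.inr v)) =>
      dsimp only
      by_cases hv : v = I.s ∨ v = I.t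
      · simp [hv]
      · push_neg at hv
        simp only [if_neg (not_or.mpr hv)]
        rw [hdiff (fun e => I.dst e = v) (fun e => I.src e = v) x, hcons v hv.1 hv.2]
        simp
    | Sum.inr (Sum.inr true) =>
      dsimp only
      rw [sum_indicator_mul (fun e => I.src e = I.s) x, htgt]
    | Sum.inr (Sum.inr false) =>
      dsimp only
      rw [hneg (fun e => I.src e = I.s) x, sum_indicator_mul (fun e => I.src e = I.s) x, htgt]
  · intro h
    refine ⟨fun p => ?_, fun v hvs hvt => ?_, ?_⟩
    · constructor
      · have := h (Sum.inl (Sum.inl p))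
        dsimp only at this
        rw [sum_single_mul] at this
        simp only [neg_one_mul] at this
        linarith
      · have := h (Sum.inl (Sum.inr p))
        dsimp only at this
        rw [sum_single_mul, one_mul] at this
        exact this
    · have hv : ¬ (v = I.s ∨ v = I.t) := not_or.mpr ⟨hvs, hvt⟩
      have h1 := h (Sum.inr (Sum.inl (Sum.inl v)))
      have h2 := h (Sum.inr (Sum.inl (Sum.inr v)))
      dsimp only at h1 h2
      simp only [if_neg hv] at h1 h2
      rw [hdiff (fun e => I.src e = v) (fun e => I.dst e = v) x] at h1
      rw [hdiff (fun e => I.dst e = v) (fun e => I.src e = v) x] at h2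
      linarith
    · have h1 := h (Sum.inr (Sum.inr true))
      have h2 := h (Sum.inr (Sum.inr false))
      dsimp only at h1 h2
      rw [sum_indicator_mul (fun e => I.src e = I.s) x] at h1
      rw [hneg (fun e => I.src e = I.s) x, sum_indicator_mul (fun e => I.src e = I.s) x] at h2
      linarith

end PolyRep

private lemma isLinearMap_dotsum {n : Type} [Fintype n] (w : n → ℝ) (S : Finset n) :
    IsLinearMap ℝ (fun x : n → ℝ => ∑ j ∈ S, w j * x j) := by
  constructor
  · intro x y
    simp only [Pi.add_apply, mul_add, Finset.sum_add_distrib]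
  · intro c x
    simp only [Pi.smul_apply, smul_eq_mul, Finset.mul_sum]
    exact Finset.sum_congr rfl fun j _ => by ring

open scoped Classical in
/-- With scaling parameters `M` on the support `H` of an ILP-optimal flow and a
sufficiently small `ε > 0` off the support (assuming positive fixed costs off the
support), every valid flow minimizing the scaled cost is supported in `H`. -/
theorem scost_min_supported_in_opt_support_of_small_eps
    {V E K : Type} [Fintype V] [Fintype E] [Fintype K]
    (I : MCFCNF V E K) (fopt : E × K → ℝ)
    (hopt : I.IsValidFlow fopt)
    (hoptmin : ∀ g, I.IsValidFlow g → I.cost fopt ≤ I.cost g)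
    (ha : ∀ p, p ∉ MCFCNF.supp fopt → 0 < I.a p) :
    ∀ M : ℝ, 0 < M → ∃ ε₀ : ℝ, 0 < ε₀ ∧ ∀ ε : ℝ, 0 < ε → ε ≤ ε₀ →
      ∀ g, I.IsValidFlow g →
        (∀ g', I.IsValidFlow g' →
          I.scost (fun p => if p ∈ MCFCNF.supp fopt then M else ε) g ≤
            I.scost (fun p => if p ∈ MCFCNF.supp fopt then M else ε) g') →
        MCFCNF.supp g ⊆ MCFCNF.supp fopt := by
  classical
  intro M hM
  set H : Finset (E × K) := MCFCNF.supp fopt with hH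
  set φ : ((E × K) → ℝ) → ℝ :=
    fun x => ∑ p ∈ Finset.univ.filter (fun p => p ∉ H), I.a p * x p with hφ
  obtain ⟨ι, hι, w, b, hrep⟩ := I.exists_polyrep
  haveI := hι
  set P : Set ((E × K) → ℝ) := {x | ∀ i, ∑ j, w i j * x j ≤ b i} with hP
  have hPmem : ∀ x, x ∈ P ↔ I.IsValidFlow x := fun x => (hrep x).symm
  have hfoptP : fopt ∈ P := (hPmem fopt).mpr hopt
  have hXfin : (Set.extremePoints ℝ P).Finite := extremePoints_polyhedron_finite w b
  have hPconvex : Convex ℝ P := by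
    rw [hP, Set.setOf_forall]
    exact convex_iInter fun i => convex_halfSpace_le (isLinearMap_dotsum (w i) Finset.univ) (b i)
  have hPclosed : IsClosed P := by
    rw [hP, Set.setOf_forall]
    exact isClosed_iInter fun i =>
      isClosed_le (continuous_finset_sum _ fun j _ => continuous_const.mul (continuous_apply j))
        continuous_const
  have hPbdd : Bornology.IsBounded P := by
    rw [isBounded_iff_forall_norm_le]
    refine ⟨∑ k, I.c k, fun x hx => ?_⟩
    have hx' := (hPmem x).mp hx
    have hC : 0 ≤ ∑ k, I.c k := Finset.sum_nonneg fun k _ => I.c_nonneg k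
    rw [pi_norm_le_iff_of_nonneg hC]
    intro p
    rw [Real.norm_eq_abs, abs_le]
    have h1 := (hx'.1 p).1
    have h2 := (hx'.1 p).2
    have h3 : I.c p.2 ≤ ∑ k, I.c k :=
      Finset.single_le_sum (fun k _ => I.c_nonneg k) (Finset.mem_univ _)
    constructor <;> linarith
  have hPcompact : IsCompact P := Metric.isCompact_of_isClosed_isBounded hPclosed hPbdd
  have hfopt0 : ∀ p, p ∉ H → fopt p = 0 := by
    intro p hp
    have h1 := (hopt.1 p).1
    by_contra h
    exact hp (by
      rw [hH]
      simp only [MCFCNF.supp, Finset.mem_filter, Finset.mem_univ, true_and]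
      exact lt_of_le_of_ne h1 (Ne.symm h))
  set m₀ : ℝ := ∑ p ∈ H, (I.a p / M + I.b p) * fopt p with hm₀
  have hm₀nonneg : 0 ≤ m₀ := by
    rw [hm₀]
    refine Finset.sum_nonneg fun p _ => mul_nonneg ?_ (hopt.1 p).1
    have := div_nonneg (I.a_nonneg p) hM.le
    have := I.b_nonneg p
    linarith
  have hscost_fopt : ∀ d : E × K → ℝ, (∀ p ∈ H, d p = M) → I.scost d fopt = m₀ := by
    intro d hd
    rw [MCFCNF.scost, hm₀,
      ← Finset.sum_subset (Finset.subset_univ H) (fun p _ hp => by rw [hfopt0 p hp, mul_zero])]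
    exact Finset.sum_congr rfl fun p hp => by rw [hd p hp]
  set Bad : Finset ((E × K) → ℝ) := hXfin.toFinset.filter (fun x => 0 < φ x) with hBad
  set ε₀ : ℝ := if hB : Bad.Nonempty then min 1 (Bad.inf' hB fun x => φ x / (m₀ + 1)) else 1
    with hε₀
  have hε₀pos : 0 < ε₀ := by
    rw [hε₀]
    split_ifs with hB
    · refine lt_min one_pos ((Finset.lt_inf'_iff hB).mpr fun x hxB => ?_)
      have h1 : 0 < φ x := (Finset.mem_filter.mp hxB).2
      have h2 : (0:ℝ) < m₀ + 1 := by linarith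
      exact div_pos h1 h2
    · exact one_pos
  refine ⟨ε₀, hε₀pos, ?_⟩
  intro ε hε hεle g hg hgmin
  set d : E × K → ℝ := fun p => if p ∈ H then M else ε with hd
  have hdpos : ∀ p, 0 < d p := by
    intro p
    rw [hd]
    dsimp only
    split_ifs
    · exact hM
    · exact hε
  set coeff : E × K → ℝ := fun p => I.a p / d p + I.b p with hcoeff
  set l : ((E × K) → ℝ) →L[ℝ] ℝ :=
    -(∑ p : E × K, coeff p • (ContinuousLinearMap.proj p : ((E × K) → ℝ) →L[ℝ] ℝ)) with hl
  have hlval : ∀ x, l x = -(I.scost d x) := by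
    intro x
    rw [hl, MCFCNF.scost]
    simp only [ContinuousLinearMap.neg_apply, ContinuousLinearMap.coe_sum',
      Finset.sum_apply, ContinuousLinearMap.coe_smul', Pi.smul_apply,
      ContinuousLinearMap.proj_apply, smul_eq_mul, neg_inj]
    rfl
  set F : Set ((E × K) → ℝ) := {x ∈ P | ∀ y ∈ P, l y ≤ l x} with hF
  have hexp : IsExposed ℝ P F := fun _ => ⟨l, hF⟩
  have hgF : g ∈ F := by
    refine ⟨(hPmem g).mpr hg, fun y hy => ?_⟩
    rw [hlval, hlval]
    exact neg_le_neg (hgmin y ((hPmem y).mp hy))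
  have hFsub : F ⊆ P := hexp.subset
  have hFconv : Convex ℝ F := hexp.convex hPconvex
  have hFclosed : IsClosed F := hexp.isClosed hPclosed
  have hFcompact : IsCompact F := hPcompact.of_isClosed_subset hFclosed hFsub
  have hscost_le : ∀ x ∈ F, I.scost d x ≤ m₀ := by
    intro x hx
    have h1 := hx.2 fopt hfoptP
    rw [hlval, hlval] at h1
    have h2 : I.scost d x ≤ I.scost d fopt := by linarith
    have h3 : I.scost d fopt = m₀ := hscost_fopt d fun p hp => by rw [hd]; exact if_pos hp
    linarith
  have hextF : ∀ x ∈ F.extremePoints ℝ, φ x ≤ 0 := by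
    intro x hxe
    by_contra hφx
    push_neg at hφx
    have hxF : x ∈ F := hxe.1
    have hxP : x ∈ P := hFsub hxF
    have hxX : x ∈ Set.extremePoints ℝ P :=
      hexp.isExtreme.extremePoints_subset_extremePoints hxe
    have hxBad : x ∈ Bad := Finset.mem_filter.mpr ⟨hXfin.mem_toFinset.mpr hxX, hφx⟩
    have hε₀le : ε₀ ≤ φ x / (m₀ + 1) := by
      rw [hε₀, dif_pos ⟨x, hxBad⟩]
      exact le_trans (min_le_right _ _) (Finset.inf'_le _ hxBad)
    have hxvalid := (hPmem x).mp hxP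
    have h1 : φ x / ε ≤ I.scost d x := by
      rw [MCFCNF.scost]
      have heq : φ x / ε = ∑ p ∈ Finset.univ.filter (fun p => p ∉ H), (I.a p / ε) * x p := by
        rw [hφ, Finset.sum_div]
        exact Finset.sum_congr rfl fun p _ => by ring
      rw [heq]
      refine le_trans (Finset.sum_le_sum ?_)
        (Finset.sum_le_sum_of_subset_of_nonneg (Finset.filter_subset _ _) ?_)
      · intro p hp
        have hpH : p ∉ H := (Finset.mem_filter.mp hp).2
        have hdp : d p = ε := by rw [hd]; exact if_neg hpH
        rw [hdp]
        have hb := I.b_nonneg p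
        have hxp := (hxvalid.1 p).1
        nlinarith
      · intro p _ _
        have h5 : 0 ≤ I.a p / d p := div_nonneg (I.a_nonneg p) (hdpos p).le
        have h6 := I.b_nonneg p
        have h7 := (hxvalid.1 p).1
        nlinarith
    have h2 : m₀ + 1 ≤ φ x / ε₀ := by
      rw [le_div_iff₀ hε₀pos]
      have := (le_div_iff₀ (by linarith : (0:ℝ) < m₀ + 1)).mp hε₀le
      linarith
    have h3 : φ x / ε₀ ≤ φ x / ε := div_le_div_of_nonneg_left hφx.le hε hεle
    have h4 := hscost_le x hxF
    linarith
  have hfinF : (F.extremePoints ℝ).Finite :=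
    hXfin.subset hexp.isExtreme.extremePoints_subset_extremePoints
  have hFhull : F = convexHull ℝ (F.extremePoints ℝ) := by
    have h := closure_convexHull_extremePoints hFcompact hFconv
    rw [(hfinF.isClosed_convexHull (𝕜 := ℝ)).closure_eq] at h
    exact h.symm
  have hφg : φ g ≤ 0 := by
    have hsub : convexHull ℝ (F.extremePoints ℝ) ⊆ {x | φ x ≤ 0} := by
      refine convexHull_min (fun x hx => hextF x hx) ?_
      rw [hφ]
      exact convex_halfSpace_le (isLinearMap_dotsum _ _) 0
    exact hsub (hFhull ▸ hgF)
  intro p hp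
  by_contra hpH
  have hgp : 0 < g p := by
    have := Finset.mem_filter.mp (by simpa only [MCFCNF.supp] using hp)
    exact this.2
  have hpos : 0 < φ g := by
    rw [hφ]
    have hmem : p ∈ Finset.univ.filter (fun p => p ∉ H) := by
      simp only [Finset.mem_filter, Finset.mem_univ, true_and]
      exact hpH
    refine lt_of_lt_of_le (mul_pos (ha p hpH) hgp) ?_
    exact Finset.single_le_sum
      (f := fun q => I.a q * g q)
      (fun q _ => mul_nonneg (I.a_nonneg q) ((hg.1 q).1)) hmem
  linarith
end

section
/- Let f_opt be an ILP-optimal valid flow of an MC-FCNF instance and let H = supp(f_opt). Then there exists M₀ > 0 such that for every M ≥ M₀: every valid flow g with supp(g) ⊆ H that minimizes the quantity ∑_{(e,k) ∈ H} (a(e,k)/M + b(e,k))·g(e,k) among all valid flows supported in H also minimizes the variable cost varcost_H among all valid flows supported in H. (On the support of the optimal solution, taking the scaling parameters sufficiently large makes the scaled LP objective select variable-cost minimizers.) -/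
open Finset

lemma extremePoints_finite_of_polyhedron {n ι : Type} [Fintype n] [Fintype ι]
    (A : ι → n → ℝ) (b : ι → ℝ) :
    (Set.extremePoints ℝ {x : n → ℝ | ∀ i, ∑ p, A i p * x p ≤ b i}).Finite := by
  classical
  set P : Set (n → ℝ) := {x : n → ℝ | ∀ i, ∑ p, A i p * x p ≤ b i} with hP
  have hlin : ∀ (i : ι) (x d : n → ℝ) (t : ℝ),
      ∑ p, A i p * (x p + t * d p) = (∑ p, A i p * x p) + t * ∑ p, A i p * d p := by
    intro i x d t
    rw [Finset.mul_sum, ← Finset.sum_add_distrib]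
    exact Finset.sum_congr rfl fun p _ => by ring
  have hsub : ∀ (i : ι) (x y : n → ℝ),
      ∑ p, A i p * (x p - y p) = (∑ p, A i p * x p) - ∑ p, A i p * y p := by
    intro i x y
    rw [← Finset.sum_sub_distrib]
    exact Finset.sum_congr rfl fun p _ => by ring
  apply Set.Finite.of_finite_image (f := fun x => Finset.univ.filter
    (fun i => ∑ p, A i p * x p = b i)) (Set.toFinite _)
  intro x hx y hy hxy
  by_contra hne
  have hxP : x ∈ P := hx.1
  have hyP : y ∈ P := hy.1
  set d : n → ℝ := fun p => x p - y p with hd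
  -- nontight constraints
  set s₀ : Finset ι := Finset.univ.filter (fun i => ∑ p, A i p * x p ≠ b i) with hs₀
  set F : Finset ℝ := insert (1:ℝ)
    (s₀.image (fun i => (b i - ∑ p, A i p * x p) / (|∑ p, A i p * d p| + 1))) with hF
  have hFne : F.Nonempty := ⟨1, Finset.mem_insert_self _ _⟩
  set ε : ℝ := F.min' hFne with hε
  have hεmem := F.min'_mem hFne
  have hεpos : 0 < ε := by
    have : ∀ r ∈ F, 0 < r := by
      intro r hr
      rcases Finset.mem_insert.1 hr with h | h
      · rw [h]; norm_num
      · obtain ⟨i, hi, rfl⟩ := Finset.mem_image.1 h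
        have hi' : ∑ p, A i p * x p ≠ b i := (Finset.mem_filter.1 hi).2
        have := hxP i
        apply div_pos (by cases this.lt_or_eq with
          | inl h => linarith
          | inr h => exact absurd h hi') (by positivity)
    exact this ε hεmem
  have hεle : ∀ i ∈ s₀, ε ≤ (b i - ∑ p, A i p * x p) / (|∑ p, A i p * d p| + 1) := by
    intro i hi
    exact F.min'_le _ (Finset.mem_insert_of_mem (Finset.mem_image_of_mem _ hi))
  have hkey : ∀ i ∈ s₀, ε * |∑ p, A i p * d p| < b i - ∑ p, A i p * x p := by
    intro i hi
    have h1 := hεle i hi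
    have h2 : (0:ℝ) < |∑ p, A i p * d p| + 1 := by positivity
    have h3 : ε * (|∑ p, A i p * d p| + 1) ≤ b i - ∑ p, A i p * x p :=
      (le_div_iff₀ h2).1 h1
    nlinarith [abs_nonneg (∑ p, A i p * d p)]
  -- the perturbed points
  have hmem : ∀ t : ℝ, |t| ≤ ε → (fun p => x p + t * d p) ∈ P := by
    intro t ht i
    rw [hlin]
    by_cases hi : ∑ p, A i p * x p = b i
    · -- tight for x, hence tight for y as well
      have hiy : ∑ p, A i p * y p = b i := by
        have hxy' : Finset.univ.filter (fun i => ∑ p, A i p * x p = b i) =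
            Finset.univ.filter (fun i => ∑ p, A i p * y p = b i) := hxy
        have : i ∈ Finset.univ.filter (fun i => ∑ p, A i p * y p = b i) := by
          rw [← hxy']; exact Finset.mem_filter.2 ⟨Finset.mem_univ _, hi⟩
        exact (Finset.mem_filter.1 this).2
      have : ∑ p, A i p * d p = 0 := by rw [hsub i x y, hi, hiy, sub_self]
      rw [this, mul_zero, add_zero, hi]
    · have hi0 : i ∈ s₀ := Finset.mem_filter.2 ⟨Finset.mem_univ _, hi⟩
      have h1 : t * ∑ p, A i p * d p ≤ ε * |∑ p, A i p * d p| := by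
        calc t * ∑ p, A i p * d p ≤ |t * ∑ p, A i p * d p| := le_abs_self _
        _ = |t| * |∑ p, A i p * d p| := abs_mul _ _
        _ ≤ ε * |∑ p, A i p * d p| := by
            exact mul_le_mul_of_nonneg_right ht (abs_nonneg _)
      have := hkey i hi0
      linarith
  have hu : (fun p => x p + ε * d p) ∈ P := hmem ε (by rw [abs_of_pos hεpos])
  have hw : (fun p => x p + (-ε) * d p) ∈ P := hmem (-ε) (by rw [abs_neg, abs_of_pos hεpos])
  have hseg : x ∈ openSegment ℝ (fun p => x p + ε * d p) (fun p => x p + (-ε) * d p) := by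
    refine ⟨1/2, 1/2, by norm_num, by norm_num, by norm_num, ?_⟩
    funext p
    simp only [Pi.add_apply, Pi.smul_apply, smul_eq_mul]
    ring
  have := hx.2 hu hw hseg
  have hd0 : ∀ p, d p = 0 := by
    intro p
    have := congrFun this p
    have hεne : ε ≠ 0 := ne_of_gt hεpos
    nlinarith [this]
  apply hne
  funext p
  have := hd0 p
  simpa [hd, sub_eq_zero] using this



section aux
variable {V E K : Type} [Fintype V] [Fintype E] [Fintype K]

open scoped Classical in
theorem test_hPeq (I : MCFCNF V E K) (H : Finset (E × K))
    (A : ((E×K) ⊕ (E×K) ⊕ V ⊕ V ⊕ Bool) → (E×K) → ℝ)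
    (hA : A = fun i q =>
      match i with
      | .inl p => if q = p then -1 else 0
      | .inr (.inl p) => if q = p then 1 else 0
      | .inr (.inr (.inl v)) => if v = I.s ∨ v = I.t then 0 else
          (if I.src q.1 = v then 1 else 0) - (if I.dst q.1 = v then 1 else 0)
      | .inr (.inr (.inr (.inl v))) => -(if v = I.s ∨ v = I.t then 0 else
          (if I.src q.1 = v then 1 else 0) - (if I.dst q.1 = v then 1 else 0))
      | .inr (.inr (.inr (.inr true))) => if I.src q.1 = I.s then 1 else 0
      | .inr (.inr (.inr (.inr false))) => -(if I.src q.1 = I.s then 1 else 0))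
    (bb : ((E×K) ⊕ (E×K) ⊕ V ⊕ V ⊕ Bool) → ℝ)
    (hbb : bb = fun i =>
      match i with
      | .inl _ => 0
      | .inr (.inl p) => if p ∈ H then I.c p.2 else 0
      | .inr (.inr (.inl _)) => 0
      | .inr (.inr (.inr (.inl _))) => 0
      | .inr (.inr (.inr (.inr true))) => I.T
      | .inr (.inr (.inr (.inr false))) => -I.T) :
    {x : (E × K) → ℝ | I.IsValidFlow x ∧ MCFCNF.supp x ⊆ H}
      = {x | ∀ i, ∑ q, A i q * x q ≤ bb i} := by
  classical
  have hind : ∀ (p : E×K) (z : (E×K) → ℝ) (c0 : ℝ),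
      ∑ q, (if q = p then c0 else 0) * z q = c0 * z p := by
    intro p z c0
    rw [Finset.sum_eq_single p]
    · simp
    · intro q _ hq; simp [hq]
    · intro h; exact absurd (Finset.mem_univ p) h
  have hsum : ∀ (z : (E×K) → ℝ) (φ : E → V) (v : V),
      ∑ q : E × K, (if φ q.1 = v then (1:ℝ) else 0) * z q
        = ∑ e ∈ Finset.univ.filter (fun e => φ e = v), ∑ k : K, z (e, k) := by
    intro z φ v
    rw [Finset.sum_filter, Fintype.sum_prod_type]
    refine Finset.sum_congr rfl fun e _ => ?_
    by_cases h : φ e = v <;> simp [h]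
  have hdiff : ∀ (z : (E×K) → ℝ) (v : V),
      ∑ q : E × K, ((if I.src q.1 = v then (1:ℝ) else 0)
          - (if I.dst q.1 = v then 1 else 0)) * z q
        = (∑ e ∈ Finset.univ.filter (fun e => I.src e = v), ∑ k : K, z (e, k))
          - ∑ e ∈ Finset.univ.filter (fun e => I.dst e = v), ∑ k : K, z (e, k) := by
    intro z v
    rw [← hsum z I.src v, ← hsum z I.dst v, ← Finset.sum_sub_distrib]
    exact Finset.sum_congr rfl fun q _ => by ring
  have hsupp_mem : ∀ (z : (E×K) → ℝ) (p : E × K), p ∈ MCFCNF.supp z ↔ 0 < z p := by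
    intro z p; simp [MCFCNF.supp]
  ext x
  simp only [Set.mem_setOf_eq]
  constructor
  · rintro ⟨⟨hbox, hcons, hsrc⟩, hsupp⟩ i
    subst hA hbb
    match i with
    | .inl p => simpa [hind] using (hbox p).1
    | .inr (.inl p) =>
      simp only []
      rw [hind]
      by_cases hp : p ∈ H
      · simpa [hp] using (hbox p).2
      · have : x p ≤ 0 := by
          by_contra h
          exact hp (hsupp ((hsupp_mem x p).2 (lt_of_not_ge h)))
        simpa [hp] using this
    | .inr (.inr (.inl v)) =>
      by_cases hv : v = I.s ∨ v = I.t
      · simp [hv]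
      · push_neg at hv
        simp only [if_neg (by push_neg; exact hv : ¬(v = I.s ∨ v = I.t))]
        rw [hdiff]
        rw [hcons v hv.1 hv.2]
        simp
    | .inr (.inr (.inr (.inl v))) =>
      by_cases hv : v = I.s ∨ v = I.t
      · simp [hv]
      · push_neg at hv
        simp only [if_neg (by push_neg; exact hv : ¬(v = I.s ∨ v = I.t)), neg_mul,
          Finset.sum_neg_distrib]
        rw [hdiff]
        rw [hcons v hv.1 hv.2]
        simp
    | .inr (.inr (.inr (.inr true))) =>
      simp only []
      rw [hsum x I.src I.s, hsrc]
    | .inr (.inr (.inr (.inr false))) =>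
      simp only [neg_mul, Finset.sum_neg_distrib]
      rw [hsum x I.src I.s, hsrc]
  · intro hA'
    subst hA hbb
    have h1 : ∀ p : E × K, 0 ≤ x p := by
      intro p
      have := hA' (.inl p)
      simp only [hind] at this
      linarith
    have h2 : ∀ p : E × K, x p ≤ if p ∈ H then I.c p.2 else 0 := by
      intro p
      have := hA' (.inr (.inl p))
      simpa [hind] using this
    refine ⟨⟨fun p => ⟨h1 p, ?_⟩, fun v hs ht => ?_, ?_⟩, ?_⟩
    · by_cases hp : p ∈ H
      · simpa [hp] using h2 p
      · exact le_trans (by simpa [hp] using h2 p) (I.c_nonneg p.2)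
    · have hv : ¬(v = I.s ∨ v = I.t) := by push_neg; exact ⟨hs, ht⟩
      have ha := hA' (.inr (.inr (.inl v)))
      have hb := hA' (.inr (.inr (.inr (.inl v))))
      simp only [if_neg hv, neg_mul, Finset.sum_neg_distrib] at ha hb
      rw [hdiff] at ha hb
      linarith
    · have ha := hA' (.inr (.inr (.inr (.inr true))))
      have hb := hA' (.inr (.inr (.inr (.inr false))))
      simp only [neg_mul, Finset.sum_neg_distrib] at ha hb
      rw [hsum x I.src I.s] at ha hb
      linarith
    · intro p hp
      have := (hsupp_mem x p).1 hp
      by_contra hpH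
      have := h2 p
      rw [if_neg hpH] at this
      linarith
end aux


open scoped Classical in
/-- On the support `H` of an ILP-optimal flow, for sufficiently large scaling
parameter `M`, every valid flow supported in `H` minimizing the scaled objective
`∑_{p ∈ H} (a p / M + b p) * g p` among valid flows supported in `H` also minimizes
the variable cost `varcost H` among valid flows supported in `H`. -/
theorem scaled_min_on_support_minimizes_varcost_of_large_M
    {V E K : Type} [Fintype V] [Fintype E] [Fintype K]
    (I : MCFCNF V E K) (fopt : E × K → ℝ)
    (hopt : I.IsValidFlow fopt)
    (hoptmin : ∀ g, I.IsValidFlow g → I.cost fopt ≤ I.cost g) :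
    ∃ M₀ : ℝ, 0 < M₀ ∧ ∀ M : ℝ, M₀ ≤ M →
      ∀ g, I.IsValidFlow g → MCFCNF.supp g ⊆ MCFCNF.supp fopt →
        (∀ g', I.IsValidFlow g' → MCFCNF.supp g' ⊆ MCFCNF.supp fopt →
          ∑ p ∈ MCFCNF.supp fopt, (I.a p / M + I.b p) * g p ≤
            ∑ p ∈ MCFCNF.supp fopt, (I.a p / M + I.b p) * g' p) →
        ∀ g', I.IsValidFlow g' → MCFCNF.supp g' ⊆ MCFCNF.supp fopt →
          I.varcost (MCFCNF.supp fopt) g ≤ I.varcost (MCFCNF.supp fopt) g' := by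
  classical
  set H : Finset (E × K) := MCFCNF.supp fopt with hH
  set P : Set ((E × K) → ℝ) := {x | I.IsValidFlow x ∧ MCFCNF.supp x ⊆ H} with hPdef
  -- polyhedron representation
  obtain ⟨A, bb, hPeq⟩ : ∃ (A : ((E×K) ⊕ (E×K) ⊕ V ⊕ V ⊕ Bool) → (E×K) → ℝ)
      (bb : ((E×K) ⊕ (E×K) ⊕ V ⊕ V ⊕ Bool) → ℝ),
      P = {x | ∀ i, ∑ q, A i q * x q ≤ bb i} :=
    ⟨_, _, test_hPeq I H _ rfl _ rfl⟩
  -- basic facts about P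
  have hmemP : ∀ x ∈ P, I.IsValidFlow x ∧ MCFCNF.supp x ⊆ H := fun x hx => hx
  have hzeroP : ∀ x ∈ P, ∀ p : E × K, p ∉ H → x p = 0 := by
    intro x hx p hp
    have h0 : 0 ≤ x p := ((hmemP x hx).1.1 p).1
    by_contra h
    have : 0 < x p := lt_of_le_of_ne h0 (Ne.symm h)
    exact hp ((hmemP x hx).2 (by simp [MCFCNF.supp, this]))
  have hnnP : ∀ x ∈ P, ∀ p : E × K, 0 ≤ x p := fun x hx p => ((hmemP x hx).1.1 p).1
  -- convexity
  have hsumlin : ∀ (i : ((E×K) ⊕ (E×K) ⊕ V ⊕ V ⊕ Bool)),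
      IsLinearMap ℝ (fun x : (E × K) → ℝ => ∑ q, A i q * x q) := by
    intro i
    constructor
    · intro x y
      rw [← Finset.sum_add_distrib]
      exact Finset.sum_congr rfl fun q _ => by simp [Pi.add_apply]; ring
    · intro c x
      rw [smul_eq_mul, Finset.mul_sum]
      exact Finset.sum_congr rfl fun q _ => by simp [Pi.smul_apply, smul_eq_mul]; ring
  have hPconv : Convex ℝ P := by
    rw [hPeq, Set.setOf_forall]
    exact convex_iInter fun i => convex_halfSpace_le (hsumlin i) (bb i)
  have hPclosed : IsClosed P := by
    rw [hPeq, Set.setOf_forall]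
    exact isClosed_iInter fun i => isClosed_le
      (continuous_finset_sum _ fun q _ => continuous_const.mul (continuous_apply q))
      continuous_const
  have hPcompact : IsCompact P := by
    refine IsCompact.of_isClosed_subset
      (isCompact_univ_pi fun p : E × K => isCompact_Icc (a := (0:ℝ)) (b := I.c p.2))
      hPclosed ?_
    intro x hx
    rw [Set.mem_univ_pi]
    intro p
    exact ⟨hnnP x hx p, ((hmemP x hx).1.1 p).2⟩
  have hfoptP : fopt ∈ P := ⟨hopt, by rw [hH]⟩
  -- fopt minimizes variable cost on P
  have hfull : ∀ x ∈ P, ∑ p : E × K, I.b p * x p = ∑ p ∈ H, I.b p * x p := by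
    intro x hx
    refine (Finset.sum_subset (Finset.subset_univ H) ?_).symm
    intro p _ hp
    rw [hzeroP x hx p hp, mul_zero]
  have hfoptmin : ∀ x ∈ P, ∑ p ∈ H, I.b p * fopt p ≤ ∑ p ∈ H, I.b p * x p := by
    intro x hx
    have hc := hoptmin x (hmemP x hx).1
    unfold MCFCNF.cost at hc
    rw [hfull x hx, hfull fopt hfoptP, ← hH] at hc
    have e3 : ∑ p ∈ MCFCNF.supp x, I.a p ≤ ∑ p ∈ H, I.a p :=
      Finset.sum_le_sum_of_subset_of_nonneg (hmemP x hx).2 (fun p _ _ => I.a_nonneg p)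
    linarith
  -- finitely many extreme points and Krein-Milman
  have hfin : (Set.extremePoints ℝ P).Finite := by
    rw [hPeq]; exact extremePoints_finite_of_polyhedron A bb
  have hhull : P ⊆ convexHull ℝ (Set.extremePoints ℝ P) := by
    have hKM := closure_convexHull_extremePoints hPcompact hPconv
    intro x hx
    rw [← hKM] at hx
    rwa [IsClosed.closure_eq (hfin.isClosed_convexHull ℝ)] at hx
  set S : Finset ((E × K) → ℝ) := hfin.toFinset with hSdef
  have hSP : ∀ y ∈ S, y ∈ P := fun y hy =>
    extremePoints_subset (hfin.mem_toFinset.1 hy)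
  -- the gap δ
  have hgap : ∃ δ : ℝ, 0 < δ ∧ ∀ y ∈ S,
      (∑ p ∈ H, I.b p * y p) < (∑ p ∈ H, I.b p * fopt p) + δ →
      (∑ p ∈ H, I.b p * y p) ≤ ∑ p ∈ H, I.b p * fopt p := by
    set S1 : Finset ((E × K) → ℝ) :=
      S.filter (fun y => (∑ p ∈ H, I.b p * fopt p) < ∑ p ∈ H, I.b p * y p) with hS1
    by_cases h : S1.Nonempty
    · refine ⟨(S1.image (fun y => (∑ p ∈ H, I.b p * y p) - ∑ p ∈ H, I.b p * fopt p)).min'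
        (h.image _), ?_, ?_⟩
      · have := Finset.min'_mem _ (h.image (fun y => (∑ p ∈ H, I.b p * y p) - ∑ p ∈ H, I.b p * fopt p))
        obtain ⟨y, hy, hval⟩ := Finset.mem_image.1 this
        rw [← hval]
        have := (Finset.mem_filter.1 hy).2
        linarith
      · intro y hy hlt
        by_contra hcon
        push_neg at hcon
        have hy1 : y ∈ S1 := Finset.mem_filter.2 ⟨hy, hcon⟩
        have := Finset.min'_le _ ((∑ p ∈ H, I.b p * y p) - ∑ p ∈ H, I.b p * fopt p)
          (Finset.mem_image_of_mem
            (fun y => (∑ p ∈ H, I.b p * y p) - ∑ p ∈ H, I.b p * fopt p) hy1)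
        linarith
    · refine ⟨1, one_pos, fun y hy _ => ?_⟩
      by_contra hcon
      push_neg at hcon
      exact h ⟨y, Finset.mem_filter.2 ⟨hy, hcon⟩⟩
  obtain ⟨δ, hδpos, hδgap⟩ := hgap
  have hvafopt : 0 ≤ ∑ p ∈ H, I.a p * fopt p :=
    Finset.sum_nonneg fun p _ => mul_nonneg (I.a_nonneg p) (hnnP fopt hfoptP p)
  refine ⟨(∑ p ∈ H, I.a p * fopt p) / δ + 1, by positivity, ?_⟩
  intro M hM g hgval hgsupp hgmin g' hg'val hg'supp
  have hgP : g ∈ P := ⟨hgval, hgsupp⟩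
  have hg'P : g' ∈ P := ⟨hg'val, hg'supp⟩
  have hMpos : 0 < M := lt_of_lt_of_le (by positivity) hM
  -- the scaled objective splits
  have hsplit : ∀ z : (E × K) → ℝ, ∑ p ∈ H, (I.a p / M + I.b p) * z p
      = (∑ p ∈ H, I.b p * z p) + (∑ p ∈ H, I.a p * z p) / M := by
    intro z
    rw [Finset.sum_div, ← Finset.sum_add_distrib]
    exact Finset.sum_congr rfl fun p _ => by ring
  have hσmin : ∀ z ∈ P, ∑ p ∈ H, (I.a p / M + I.b p) * g p
      ≤ ∑ p ∈ H, (I.a p / M + I.b p) * z p := fun z hz => hgmin z hz.1 hz.2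
  -- decompose g over extreme points
  have hmemhull := hhull hgP
  rw [Set.Finite.convexHull_eq hfin] at hmemhull
  obtain ⟨w, hw0, hw1, hwc⟩ := hmemhull
  have hw0' : ∀ y ∈ S, 0 ≤ w y := fun y hy => hw0 y (hfin.mem_toFinset.1 hy)
  have hgdec : ∑ y ∈ S, w y • y = g := by
    rw [← hwc, Finset.centerMass_eq_of_sum_1 _ id hw1]
    simp [hSdef]
  have hlin2 : ∀ coef : (E × K) → ℝ,
      ∑ p ∈ H, coef p * g p = ∑ y ∈ S, w y * ∑ p ∈ H, coef p * y p := by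
    intro coef
    conv_lhs => rw [← hgdec]
    simp only [Finset.sum_apply, Pi.smul_apply, smul_eq_mul, Finset.mul_sum]
    rw [Finset.sum_comm]
    exact Finset.sum_congr rfl fun y _ => Finset.sum_congr rfl fun p _ => by ring
  -- each extreme point with positive weight has scaled value ≤ that of g
  have hyle : ∀ y ∈ S, 0 < w y →
      ∑ p ∈ H, (I.a p / M + I.b p) * y p ≤ ∑ p ∈ H, (I.a p / M + I.b p) * g p := by
    intro y0 hy0 hwy0
    by_contra hcon
    push_neg at hcon
    have hlt : ∑ y ∈ S, w y * ∑ p ∈ H, (I.a p / M + I.b p) * g p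
        < ∑ y ∈ S, w y * ∑ p ∈ H, (I.a p / M + I.b p) * y p := by
      refine Finset.sum_lt_sum (fun y hy => ?_) ⟨y0, hy0, ?_⟩
      · exact mul_le_mul_of_nonneg_left (hσmin y (hSP y hy)) (hw0' y hy)
      · exact mul_lt_mul_of_pos_left hcon hwy0
    rw [← hlin2, ← Finset.sum_mul, hw1, one_mul] at hlt
    exact lt_irrefl _ hlt
  -- hence each such extreme point minimizes variable cost
  have hvafoptM : (∑ p ∈ H, I.a p * fopt p) / M < δ := by
    rw [div_lt_iff₀ hMpos]
    have h1 : (∑ p ∈ H, I.a p * fopt p) / δ + 1 ≤ M := hM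
    have h2 : (∑ p ∈ H, I.a p * fopt p) / δ * δ = ∑ p ∈ H, I.a p * fopt p :=
      div_mul_cancel₀ _ (ne_of_gt hδpos)
    nlinarith
  have hφy : ∀ y ∈ S, 0 < w y →
      (∑ p ∈ H, I.b p * y p) ≤ ∑ p ∈ H, I.b p * fopt p := by
    intro y hy hwy
    have h1 : (∑ p ∈ H, I.b p * y p) ≤ ∑ p ∈ H, (I.a p / M + I.b p) * y p := by
      refine Finset.sum_le_sum fun p _ => ?_
      have := mul_nonneg (div_nonneg (I.a_nonneg p) hMpos.le) (hnnP y (hSP y hy) p)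
      nlinarith
    have h2 := hyle y hy hwy
    have h3 := hσmin fopt hfoptP
    rw [hsplit fopt] at h3
    refine hδgap y hy ?_
    linarith
  -- conclude
  have hg_le : (∑ p ∈ H, I.b p * g p) ≤ ∑ p ∈ H, I.b p * fopt p := by
    rw [hlin2 I.b]
    calc ∑ y ∈ S, w y * ∑ p ∈ H, I.b p * y p
        ≤ ∑ y ∈ S, w y * ∑ p ∈ H, I.b p * fopt p := by
          refine Finset.sum_le_sum fun y hy => ?_
          rcases (hw0' y hy).lt_or_eq with h | h
          · exact mul_le_mul_of_nonneg_left (hφy y hy h) (hw0' y hy)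
          · rw [← h]; simp
      _ = ∑ p ∈ H, I.b p * fopt p := by rw [← Finset.sum_mul, hw1, one_mul]
  have := hfoptmin g' hg'P
  show (∑ p ∈ H, I.b p * g p) ≤ ∑ p ∈ H, I.b p * g' p
  linarith
end
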